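/- arXiv:math/0509608 — 2 statements merged into one kernel-verified Lean document; each statement's English description precedes it below -/
import Mathlib

section
/- Every graph G has a subdivision H with π(H) ≤ 4; that is, every graph has a subdivision admitting a path-nonrepetitive 4-colouring. -/
open SimpleGraph

/-- `v 0, v 1, …, v (n-1)` is a walk in `G` (consecutive vertices are adjacent). -/
def IsWalkSeq {V : Type} (G : SimpleGraph V) (n : ℕ) (v : ℕ → V) : Prop :=
  ∀ i : ℕ, i + 1 < n → G.Adj (v i) (v (i + 1))

/-- `v 0, …, v (n-1)` is a path in `G` (a walk with pairwise distinct vertices). -/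
def IsPathSeq {V : Type} (G : SimpleGraph V) (n : ℕ) (v : ℕ → V) : Prop :=
  IsWalkSeq G n v ∧ ∀ i < n, ∀ j < n, v i = v j → i = j

/-- The walk `v 0, …, v (2t-1)` is repetitively coloured by `f`. -/
def RepetitivelyColoured {V C : Type} (f : V → C) (t : ℕ) (v : ℕ → V) : Prop :=
  ∀ i < t, f (v i) = f (v (t + i))

/-- The walk `v 0, …, v (2t-1)` is boring. -/
def BoringWalk {V : Type} (t : ℕ) (v : ℕ → V) : Prop :=
  ∀ i < t, v i = v (t + i)

/-- A colouring is nonrepetitive on walks: every repetitively coloured walk is boring. -/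
def WalkNonrepetitive {V C : Type} (G : SimpleGraph V) (f : V → C) : Prop :=
  ∀ (t : ℕ) (v : ℕ → V), IsWalkSeq G (2 * t) v → RepetitivelyColoured f t v → BoringWalk t v

/-- A colouring is nonrepetitive on paths: no (nonempty) path is repetitively coloured. -/
def PathNonrepetitive {V C : Type} (G : SimpleGraph V) (f : V → C) : Prop :=
  ∀ (t : ℕ) (v : ℕ → V), 0 < t → IsPathSeq G (2 * t) v → ¬ RepetitivelyColoured f t v

/-- A distance-2 colouring: distinct vertices at distance at most 2 get distinct colours. -/
def Distance2Coloring {V C : Type} (G : SimpleGraph V) (f : V → C) : Prop :=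
  ∀ u w : V, u ≠ w → (G.Adj u w ∨ ∃ x, G.Adj u x ∧ G.Adj x w) → f u ≠ f w

/-- σ(G): the minimum number of colours in a walk-nonrepetitive colouring of `G`. -/
noncomputable def sigmaNR {V : Type} (G : SimpleGraph V) : ℕ :=
  sInf {k | ∃ f : V → Fin k, WalkNonrepetitive G f}

/-- π(G): the minimum number of colours in a path-nonrepetitive colouring of `G`. -/
noncomputable def piNR {V : Type} (G : SimpleGraph V) : ℕ :=
  sInf {k | ∃ f : V → Fin k, PathNonrepetitive G f}

/-- The square graph `G²`: distinct vertices at distance at most 2 are adjacent. -/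
def squareGraph {V : Type} (G : SimpleGraph V) : SimpleGraph V where
  Adj u w := u ≠ w ∧ (G.Adj u w ∨ ∃ x, G.Adj u x ∧ G.Adj x w)
  symm := by
    constructor
    rintro u w ⟨h1, h2⟩
    refine ⟨h1.symm, ?_⟩
    rcases h2 with h | ⟨x, hx1, hx2⟩
    · exact Or.inl h.symm
    · exact Or.inr ⟨x, hx2.symm, hx1.symm⟩
  loopless := by constructor; rintro u ⟨h, -⟩; exact h rfl

/-- A levelling of `G`: levels of adjacent vertices differ by at most 1. -/
def IsLevelling {V : Type} (G : SimpleGraph V) (lam : V → ℤ) : Prop :=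
  ∀ u w : V, G.Adj u w → |lam u - lam w| ≤ 1

/-- A levelling is shadow-complete if, for every `k`, the `k`-shadow of every connected
component of `G_{λ>k}` induces a clique: if `u` and `w` are on level `k` and each has a
neighbour in the same component of `G_{λ>k}`, then `u = w` or `u` and `w` are adjacent. -/
def ShadowComplete {V : Type} (G : SimpleGraph V) (lam : V → ℤ) : Prop :=
  ∀ (k : ℤ) (u w : V), lam u = k → lam w = k →
    (∃ (x y : {v : V | k < lam v}), G.Adj u x.1 ∧ G.Adj w y.1 ∧
      (G.induce {v : V | k < lam v}).Reachable x y) →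
    u = w ∨ G.Adj u w

/-- The number of distinct vertices of the walk `v 0, …, v (n-1)`. -/
def walkOrder {V : Type} [DecidableEq V] (n : ℕ) (v : ℕ → V) : ℕ :=
  ((Finset.range n).image v).card

/-- `G` has a tree-partition in which every bag has at most `ℓ` vertices:
the vertices are mapped to the nodes of a forest so that the bags (preimages)
have at most `ℓ` vertices each, and adjacent vertices of `G` lie in the same bag
or in bags corresponding to adjacent nodes of the forest. -/
def HasTreePartition {V : Type} (G : SimpleGraph V) (ℓ : ℕ) : Prop :=
  ∃ (B : Type) (F : SimpleGraph B) (b : V → B),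
    F.IsAcyclic ∧
    (∀ u w : V, G.Adj u w → b u = b w ∨ F.Adj (b u) (b w)) ∧
    (∀ x : B, {v : V | b v = x}.ncard ≤ ℓ)

/-- The graph obtained from `G` by subdividing the edge `uw`: a new vertex `none` is adjacent
to `u` and `w`, the edge `uw` is deleted, and all other edges are kept. -/
def subdivideEdge {V : Type} (G : SimpleGraph V) (u w : V) : SimpleGraph (Option V) :=
  SimpleGraph.fromRel (fun a b =>
    (∃ x y : V, a = some x ∧ b = some y ∧ G.Adj x y ∧
      ¬(x = u ∧ y = w) ∧ ¬(x = w ∧ y = u)) ∨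
    (a = none ∧ (b = some u ∨ b = some w)))

/-- `IsSubdivision G H` means that `H` is obtained from `G` by repeatedly subdividing edges,
i.e. `H` is a subdivision of `G`. -/
inductive IsSubdivision : {V : Type} → {W : Type} → SimpleGraph V → SimpleGraph W → Prop
  | refl {V : Type} (G : SimpleGraph V) : IsSubdivision G G
  | step {V W : Type} (G : SimpleGraph V) (H : SimpleGraph W) (u w : W) (h : H.Adj u w)
      (hsub : IsSubdivision G H) : IsSubdivision G (subdivideEdge H u w)


open SimpleGraph
def tm : ℕ → Bool
  | 0 => false
  | n+1 => if (n+1) % 2 = 0 then tm ((n+1)/2) else !tm ((n+1)/2)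
decreasing_by all_goals omega
lemma tm_two_mul (n : ℕ) : tm (2*n) = tm n := by
  cases n with
  | zero => rfl
  | succ k =>
    rw [show 2*(k+1) = (2*k+1)+1 by ring, tm]
    rw [if_pos (by omega : (2*k+1+1) % 2 = 0), show (2*k+1+1)/2 = k+1 by omega]
lemma tm_two_mul_add_one (n : ℕ) : tm (2*n+1) = !tm n := by
  rw [show 2*n+1 = (2*n)+1 by ring, tm]
  rw [if_neg (by omega : ¬ (2*n+1) % 2 = 0), show (2*n+1)/2 = n by omega]
lemma tm_adj (n : ℕ) : tm (2*n) ≠ tm (2*n+1) := by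
  rw [tm_two_mul, tm_two_mul_add_one]
  cases tm n <;> simp

theorem tm_overlap_free : ∀ s, 0 < s → ∀ i, ¬ (∀ j ≤ s, tm (i + j) = tm (i + j + s)) := by
  intro s
  induction s using Nat.strong_induction_on with
  | _ s IH =>
  intro hs i H
  rcases Nat.even_or_odd s with ⟨r, hr⟩ | ⟨r, hr⟩
  · -- s even, s = r + r
    have hr1 : 0 < r := by omega
    apply IH r (by omega) hr1 (i/2)
    intro j hj
    by_cases hm : i ≤ 2*(i/2 + j)
    · have h2 : 2*(i/2+j) ≤ i + s := by omega
      have h3 := H (2*(i/2+j) - i) (by omega)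
      rw [show i + (2*(i/2+j) - i) = 2*(i/2+j) by omega] at h3
      have e1 : tm (2*(i/2+j)) = tm (i/2+j) := tm_two_mul _
      have e2 : tm (2*(i/2+j) + s) = tm (i/2+j+r) := by
        rw [show 2*(i/2+j)+s = 2*(i/2+j+r) by omega]; exact tm_two_mul _
      rw [e1, e2] at h3; exact h3
    · -- 2*(i/2+j) < i forces j = 0 and i odd
      have hj0 : j = 0 := by omega
      subst hj0
      have hi : i = 2*(i/2) + 1 := by omega
      have h3 : tm i = tm (i + s) := by simpa using H 0 (by omega)
      rw [hi, show 2*(i/2)+1+s = 2*(i/2+r)+1 by omega, tm_two_mul_add_one,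
        tm_two_mul_add_one] at h3
      simp only [Nat.add_zero]
      simpa using h3
  · -- s odd, s = 2r+1
    by_cases hex : ∃ m, i ≤ m ∧ m + 1 ≤ i + s ∧ tm m = tm (m+1)
    · obtain ⟨m, h1, h2, h3⟩ := hex
      rcases Nat.even_or_odd m with ⟨n, hn⟩ | ⟨n, hn⟩
      · exact absurd h3 (by rw [show m = 2*n by omega]; exact tm_adj n)
      · have e1 := H (m - i) (by omega)
        rw [show i + (m-i) = m by omega] at e1
        have e2 := H (m+1-i) (by omega)
        rw [show i + (m+1-i) = m+1 by omega] at e2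
        apply tm_adj ((m+s)/2)
        rw [show 2*((m+s)/2) = m+s by omega]
        rw [← e1, show m+s+1 = m+1+s by omega, ← e2]
        exact h3
    · push_neg at hex
      have alt : ∀ j ≤ s, tm (i+j) = (if j % 2 = 0 then tm i else !tm i) := by
        intro j
        induction j with
        | zero => simp
        | succ k ihk =>
          intro hk
          have hprev := ihk (by omega)
          have hne := hex (i+k) (by omega) (by omega)
          have hflip : tm (i+k+1) = !tm (i+k) := by
            cases h : tm (i+k) <;> cases h' : tm (i+k+1) <;>
              first | rfl | (exact absurd (h.trans h'.symm) hne)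
          rw [show i+(k+1) = i+k+1 by omega, hflip, hprev]
          rcases Nat.even_or_odd k with ⟨u,hu⟩ | ⟨u,hu⟩
          · rw [if_pos (by omega), if_neg (by omega)]
          · rw [if_neg (by omega), if_pos (by omega)]
            simp
      have h0 : tm i = tm (i + s) := by simpa using H 0 (by omega)
      have hsalt := alt s le_rfl
      rw [if_neg (by omega), ← h0] at hsalt
      cases h : tm i <;> rw [h] at hsalt <;> simp at hsalt

def tmz (n : ℕ) : ℤ := if tm n then 1 else 0
def tau (n : ℕ) : ℤ := tmz (n+1) - tmz n

lemma tmz_01 (n : ℕ) : tmz n = 0 ∨ tmz n = 1 := by unfold tmz; split <;> simp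

lemma tmz_inj {a b : ℕ} (h : tmz a = tmz b) : tm a = tm b := by
  unfold tmz at h; split at h <;> split at h <;> simp_all

theorem tau_sqfree : ∀ i s, 0 < s → ¬ (∀ j < s, tau (i+j) = tau (i+s+j)) := by
  intro i s hs H
  have tel : ∀ j ≤ s, tmz (i+s+j) - tmz (i+s) = tmz (i+j) - tmz i := by
    intro j
    induction j with
    | zero => simp
    | succ k ihk =>
      intro hk
      have h1 := ihk (by omega)
      have h2 := H k (by omega)
      unfold tau at h2
      have e1 : i + s + (k+1) = (i+s+k) + 1 := by ring
      have e2 : i + (k+1) = (i+k) + 1 := by ring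
      rw [e1, e2]
      omega
  set δ := tmz (i+s) - tmz i with hδ
  by_cases h0 : δ = 0
  · apply tm_overlap_free s hs i
    intro j hj
    have h1 := tel j hj
    have h2 : tmz (i+j) = tmz (i+j+s) := by
      rw [show i+j+s = i+s+j by ring]; omega
    exact tmz_inj h2
  · have h1 := tel s le_rfl
    rcases tmz_01 (i+s+s) with h2 | h2 <;> rcases tmz_01 (i+s) with h3 | h3 <;>
      rcases tmz_01 i with h4 | h4 <;> omega

lemma tau_ne_succ (n : ℕ) : tau n ≠ tau (n+1) := by
  intro h
  apply tau_sqfree n 1 one_pos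
  intro j hj
  interval_cases j
  simpa using h

lemma tau_mem (n : ℕ) : tau n = -1 ∨ tau n = 0 ∨ tau n = 1 := by
  unfold tau
  rcases tmz_01 (n+1) with h1 | h1 <;> rcases tmz_01 n with h2 | h2 <;> omega

lemma tau_sqfree_rev (c t : ℕ) (ht : 0 < t) (hc : 2*t - 1 ≤ c)
    (H : ∀ i < t, tau (c - i) = tau (c - t - i)) : False := by
  apply tau_sqfree (c + 1 - 2*t) t ht
  intro j hj
  have h1 := H (t - 1 - j) (by omega)
  rw [show c - (t-1-j) = (c + 1 - 2*t) + t + j by omega,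
      show c - t - (t-1-j) = (c + 1 - 2*t) + j by omega] at h1
  exact h1.symm

section Model
open Classical
variable {V : Type} [Fintype V] (G : SimpleGraph V)

noncomputable def vemb : V → ℕ := fun x => (Fintype.equivFin V x : ℕ)

lemma vemb_inj : Function.Injective (vemb (V := V)) := by
  intro a b h
  have := Fin.val_injective h
  exact (Fintype.equivFin V).injective this

abbrev EdgeT := {p : V × V // G.Adj p.1 p.2 ∧ vemb p.1 < vemb p.2}

lemma fst_ne_snd (e : EdgeT G) : e.1.1 ≠ e.1.2 := by
  intro h
  have h2 := e.2.2
  rw [h] at h2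
  exact lt_irrefl _ h2

lemma edge_adj (e : EdgeT G) : G.Adj e.1.1 e.1.2 := e.2.1

instance : Finite (EdgeT G) := by
  unfold EdgeT; infer_instance

noncomputable def heidx : EdgeT G × Bool → ℕ :=
  (exists_injective_nat (EdgeT G × Bool)).choose

lemma heidx_inj : Function.Injective (heidx G) :=
  (exists_injective_nat (EdgeT G × Bool)).choose_spec

def glen (k : ℕ) : ℕ := if tau (2*k+2) ≠ tau 0 then 2*k+3 else 2*k+2

lemma glen_ge (k : ℕ) : 2 ≤ glen k := by unfold glen; split <;> omega

lemma glen_tau (k : ℕ) : tau (glen k - 1) ≠ tau 0 := by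
  unfold glen
  split
  · next h => rw [show 2*k+3-1 = 2*k+2 by omega]; exact h
  · next h =>
    push_neg at h
    rw [show 2*k+2-1 = 2*k+1 by omega]
    intro h2
    exact tau_ne_succ (2*k+1) (by rw [h2, ← h])

lemma glen_inj : Function.Injective glen := by
  intro a b h
  have h1 : 2*a+2 ≤ glen a ∧ glen a ≤ 2*a+3 := by unfold glen; split <;> omega
  have h2 : 2*b+2 ≤ glen b ∧ glen b ≤ 2*b+3 := by unfold glen; split <;> omega
  omega

noncomputable def hlen (h : EdgeT G × Bool) : ℕ := glen (heidx G h)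

lemma hlen_ge (h : EdgeT G × Bool) : 2 ≤ hlen G h := glen_ge _
lemma hlen_tau (h : EdgeT G × Bool) : tau (hlen G h - 1) ≠ tau 0 := glen_tau _
lemma hlen_inj : Function.Injective (hlen G) := fun a b h => heidx_inj G (glen_inj h)

noncomputable def emid (e : EdgeT G) : ℕ := hlen G (e, false)
noncomputable def elen (e : EdgeT G) : ℕ := hlen G (e, false) + 1 + hlen G (e, true)

lemma emid_ge (e : EdgeT G) : 2 ≤ emid G e := hlen_ge G _
lemma elen_emid (e : EdgeT G) : emid G e + 3 ≤ elen G e := by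
  have := hlen_ge G (e, true); unfold elen emid; omega

abbrev Vtx (c : EdgeT G → ℕ) : Type := V ⊕ {p : EdgeT G × ℕ // p.2 < c p.1}

def nodeC (c : EdgeT G → ℕ) (e : EdgeT G) (i : ℕ) : Vtx G c :=
  if i = 0 then Sum.inl e.1.1
  else if h : i - 1 < c e then Sum.inr ⟨(e, i-1), h⟩
  else Sum.inl e.1.2

def relC (c : EdgeT G → ℕ) (a b : Vtx G c) : Prop :=
  ∃ e i, i ≤ c e ∧ a = nodeC G c e i ∧ b = nodeC G c e (i+1)

def MC (c : EdgeT G → ℕ) : SimpleGraph (Vtx G c) := SimpleGraph.fromRel (relC G c)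

variable {c : EdgeT G → ℕ}

lemma nodeC_zero (e : EdgeT G) : nodeC G c e 0 = Sum.inl e.1.1 := by simp [nodeC]

lemma nodeC_inr {e : EdgeT G} {i : ℕ} (h1 : 1 ≤ i) (h2 : i - 1 < c e) :
    nodeC G c e i = Sum.inr ⟨(e, i-1), h2⟩ := by
  unfold nodeC
  rw [if_neg (by omega), dif_pos h2]

lemma nodeC_snd {e : EdgeT G} {i : ℕ} (h : c e + 1 ≤ i) :
    nodeC G c e i = Sum.inl e.1.2 := by
  unfold nodeC
  rw [if_neg (by omega), dif_neg (by omega)]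

lemma inr_eq_nodeC {e : EdgeT G} {k : ℕ} (hk : k < c e) :
    (Sum.inr ⟨(e,k), hk⟩ : Vtx G c) = nodeC G c e (k+1) := by
  unfold nodeC
  rw [if_neg (by omega : ¬ k + 1 = 0), dif_pos (show k+1-1 < c e by omega)]
  rfl

lemma nodeC_inr_elim {e' : EdgeT G} {i : ℕ} {p : {p : EdgeT G × ℕ // p.2 < c p.1}}
    (h : nodeC G c e' i = Sum.inr p) : p.1.1 = e' ∧ i = p.1.2 + 1 := by
  unfold nodeC at h
  split at h
  · exact absurd h (by simp)
  · split at h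
    · next hi0 hlt =>
      obtain rfl := ((Sum.inr.injEq _ _).mp h)
      exact ⟨rfl, show i = i - 1 + 1 by omega⟩
    · exact absurd h (by simp)

lemma nodeC_inl_fst_elim {e : EdgeT G} {i : ℕ} {u : V} (hi : i ≤ c e)
    (h : nodeC G c e i = Sum.inl u) : i = 0 ∧ u = e.1.1 := by
  unfold nodeC at h
  split at h
  · next h1 => exact ⟨h1, (Sum.inl.injEq _ _).mp h |>.symm⟩
  · split at h
    · exact absurd h (by simp)
    · next h1 h2 => omega

lemma nodeC_inl_snd_elim {e : EdgeT G} {i : ℕ} {u : V} (hi : i ≤ c e)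
    (h : nodeC G c e (i+1) = Sum.inl u) : i = c e ∧ u = e.1.2 := by
  unfold nodeC at h
  split at h
  · exact absurd ‹i + 1 = 0› (by omega)
  · split at h
    · exact absurd h (by simp)
    · next h1 h2 =>
      exact ⟨by omega, (Sum.inl.injEq _ _).mp h |>.symm⟩

lemma nodeC_inj_idx {e : EdgeT G} {i j : ℕ} (hi : i ≤ c e + 1) (hj : j ≤ c e + 1)
    (h : nodeC G c e i = nodeC G c e j) : i = j := by
  unfold nodeC at h
  by_cases h1 : i = 0 <;> by_cases h2 : j = 0
  · omega
  · rw [if_pos h1, if_neg h2] at h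
    by_cases h3 : j - 1 < c e
    · rw [dif_pos h3] at h; exact absurd h (by simp)
    · rw [dif_neg h3] at h
      exact absurd ((Sum.inl.injEq _ _).mp h) (fst_ne_snd G e)
  · rw [if_neg h1, if_pos h2] at h
    by_cases h3 : i - 1 < c e
    · rw [dif_pos h3] at h; exact absurd h (by simp)
    · rw [dif_neg h3] at h
      exact absurd ((Sum.inl.injEq _ _).mp h).symm (fst_ne_snd G e)
  · rw [if_neg h1, if_neg h2] at h
    by_cases h3 : i - 1 < c e <;> by_cases h4 : j - 1 < c e
    · rw [dif_pos h3, dif_pos h4] at h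
      have h6 := (Sum.inr.injEq _ _).mp h
      have h5 : i - 1 = j - 1 := congrArg (fun q => q.1.2) h6
      omega
    · rw [dif_pos h3, dif_neg h4] at h; exact absurd h (by simp)
    · rw [dif_neg h3, dif_pos h4] at h; exact absurd h (by simp)
    · omega

lemma MC_adj {a b : Vtx G c} :
    (MC G c).Adj a b ↔ a ≠ b ∧ (relC G c a b ∨ relC G c b a) := by
  unfold MC
  rw [SimpleGraph.fromRel_adj]

lemma adj_struct {a b : Vtx G c} (h : (MC G c).Adj a b) :
    ∃ e i, i ≤ c e ∧ ((a = nodeC G c e i ∧ b = nodeC G c e (i+1)) ∨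
      (b = nodeC G c e i ∧ a = nodeC G c e (i+1))) := by
  rw [MC_adj] at h
  rcases h.2 with ⟨e, i, hi, h1, h2⟩ | ⟨e, i, hi, h1, h2⟩
  · exact ⟨e, i, hi, Or.inl ⟨h1, h2⟩⟩
  · exact ⟨e, i, hi, Or.inr ⟨h1, h2⟩⟩

lemma interior_nbr {e : EdgeT G} {k : ℕ} {hk : k < c e} {y : Vtx G c}
    (h : (MC G c).Adj (Sum.inr ⟨(e,k),hk⟩) y) :
    y = nodeC G c e k ∨ y = nodeC G c e (k+2) := by
  obtain ⟨e', i, hi, hcase⟩ := adj_struct G h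
  rcases hcase with ⟨h1, h2⟩ | ⟨h1, h2⟩
  · obtain ⟨he, hidx⟩ := nodeC_inr_elim G h1.symm
    have he' : e = e' := he
    have hidx' : i = k + 1 := hidx
    subst he'
    right
    rw [h2, show i + 1 = k + 2 by omega]
  · obtain ⟨he, hidx⟩ := nodeC_inr_elim G h2.symm
    have he' : e = e' := he
    have hidx' : i + 1 = k + 1 := hidx
    subst he'
    left
    rw [h1, show i = k by omega]

lemma inl_nbr {u : V} {y : Vtx G c} (h : (MC G c).Adj (Sum.inl u) y) :
    ∃ e : EdgeT G, (u = e.1.1 ∧ y = nodeC G c e 1) ∨ (u = e.1.2 ∧ y = nodeC G c e (c e)) := by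
  obtain ⟨e, i, hi, hcase⟩ := adj_struct G h
  rcases hcase with ⟨h1, h2⟩ | ⟨h1, h2⟩
  · obtain ⟨hi0, hu⟩ := nodeC_inl_fst_elim G hi h1.symm
    subst hi0
    exact ⟨e, Or.inl ⟨hu.symm ▸ rfl, by rw [h2]⟩⟩
  · obtain ⟨hie, hu⟩ := nodeC_inl_snd_elim G hi h2.symm
    exact ⟨e, Or.inr ⟨by rw [hu], by rw [h1, hie]⟩⟩
end Model

section Colouring
open Classical
variable {V : Type} [Fintype V] (G : SimpleGraph V)

noncomputable def col3 (z : ℤ) : Fin 4 := if z = 0 then 1 else if z = 1 then 2 else 3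

lemma col3_ne (z : ℤ) : col3 z ≠ 0 := by
  unfold col3
  split
  · decide
  · split
    · decide
    · decide

lemma col3_tau_inj {a b : ℕ} (h : col3 (tau a) = col3 (tau b)) : tau a = tau b := by
  unfold col3 at h
  rcases tau_mem a with h1 | h1 | h1 <;> rcases tau_mem b with h2 | h2 | h2 <;>
    rw [h1, h2] at h ⊢ <;> simp_all

noncomputable def fstar : Vtx G (elen G) → Fin 4 :=
  fun x => match x with
  | .inl _ => 0
  | .inr ⟨(e, k), _⟩ =>
    if k < emid G e then col3 (tau k)
    else if k = emid G e then 0 else col3 (tau (elen G e - 1 - k))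

lemma fstar_inl (u : V) : fstar G (Sum.inl u) = 0 := rfl

lemma fnode_zero (e : EdgeT G) : fstar G (nodeC G (elen G) e 0) = 0 := by
  rw [nodeC_zero]; rfl

lemma fnode_snd {e : EdgeT G} {i : ℕ} (h : elen G e + 1 ≤ i) :
    fstar G (nodeC G (elen G) e i) = 0 := by
  rw [nodeC_snd G h]; rfl

lemma fnode_mid (e : EdgeT G) : fstar G (nodeC G (elen G) e (emid G e + 1)) = 0 := by
  have h1 : emid G e + 1 - 1 < elen G e := by have := elen_emid G e; omega
  rw [nodeC_inr G (by omega) h1]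
  show (if emid G e + 1 - 1 < emid G e then _ else if emid G e + 1 - 1 = emid G e then (0 : Fin 4) else _) = 0
  rw [if_neg (by omega), if_pos (by omega)]

lemma fnode_lo {e : EdgeT G} {r : ℕ} (h1 : 1 ≤ r) (h2 : r ≤ emid G e) :
    fstar G (nodeC G (elen G) e r) = col3 (tau (r - 1)) := by
  have hb : r - 1 < elen G e := by have := elen_emid G e; omega
  rw [nodeC_inr G h1 hb]
  show (if r - 1 < emid G e then col3 (tau (r-1)) else _) = _
  rw [if_pos (by omega)]

lemma fnode_hi {e : EdgeT G} {r : ℕ} (h1 : emid G e + 2 ≤ r) (h2 : r ≤ elen G e) :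
    fstar G (nodeC G (elen G) e r) = col3 (tau (elen G e - r)) := by
  have hb : r - 1 < elen G e := by omega
  rw [nodeC_inr G (by omega) hb]
  show (if r - 1 < emid G e then _ else if r - 1 = emid G e then _
    else col3 (tau (elen G e - 1 - (r-1)))) = _
  rw [if_neg (by omega), if_neg (by omega), show elen G e - 1 - (r-1) = elen G e - r by omega]

lemma fnode_ne0 {e : EdgeT G} {r : ℕ} (h : fstar G (nodeC G (elen G) e r) ≠ 0) :
    1 ≤ r ∧ r ≤ elen G e ∧ r ≠ emid G e + 1 := by
  by_cases h1 : 1 ≤ r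
  · by_cases h2 : r ≤ elen G e
    · refine ⟨h1, h2, ?_⟩
      intro hmid
      rw [hmid] at h
      exact h (fnode_mid G e)
    · exact absurd (fnode_snd G (by omega)) h
  · have h0 : r = 0 := by omega
    rw [h0] at h
    exact absurd (fnode_zero G e) h

lemma fnode_interior {e : EdgeT G} {r : ℕ} (h : fstar G (nodeC G (elen G) e r) ≠ 0) :
    ∃ hk : r - 1 < elen G e, nodeC G (elen G) e r = Sum.inr ⟨(e, r-1), hk⟩ := by
  obtain ⟨h1, h2, h3⟩ := fnode_ne0 G h
  by_cases hk : r - 1 < elen G e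
  · exact ⟨hk, nodeC_inr G h1 hk⟩
  · omega

lemma special_idx {e : EdgeT G} {r : ℕ} (hb : r ≤ elen G e + 1)
    (h : fstar G (nodeC G (elen G) e r) = 0) :
    r = 0 ∨ r = emid G e + 1 ∨ r = elen G e + 1 := by
  by_contra hcon
  push_neg at hcon
  obtain ⟨hc1, hc2, hc3⟩ := hcon
  by_cases hr : r ≤ emid G e
  · rw [fnode_lo G (by omega) hr] at h
    exact col3_ne _ h
  · rw [fnode_hi G (by omega) (by omega)] at h
    exact col3_ne _ h

lemma no_adj_specials {x y : Vtx G (elen G)} (h : (MC G (elen G)).Adj x y)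
    (hx : fstar G x = 0) (hy : fstar G y = 0) : False := by
  obtain ⟨e, i, hi, hcase⟩ := adj_struct G h
  have hme := emid_ge G e
  have hle := elen_emid G e
  have key : ∀ i, i ≤ elen G e → fstar G (nodeC G (elen G) e i) = 0 →
      fstar G (nodeC G (elen G) e (i+1)) = 0 → False := by
    intro i hi h1 h2
    have k1 := special_idx G (by omega) h1
    have k2 := special_idx G (by omega) h2
    omega
  rcases hcase with ⟨h1, h2⟩ | ⟨h1, h2⟩
  · rw [h1] at hx; rw [h2] at hy
    exact key i hi hx hy
  · rw [h1] at hy; rw [h2] at hx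
    exact key i hi hy hx

end Colouring

section Walks
open Classical
variable {V : Type} [Fintype V] (G : SimpleGraph V)

lemma walk_asc {u : ℕ → Vtx G (elen G)} {n : ℕ} {e : EdgeT G} {i₀ : ℕ}
    (hadj : ∀ p, p + 1 ≤ n → (MC G (elen G)).Adj (u p) (u (p+1)))
    (hinj : ∀ p, p ≤ n → ∀ q, q ≤ n → u p = u q → p = q)
    (hns : ∀ p, 1 ≤ p → p < n → fstar G (u p) ≠ 0)
    (hn : 1 ≤ n)
    (h0 : u 0 = nodeC G (elen G) e i₀) (h1 : u 1 = nodeC G (elen G) e (i₀+1)) :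
    ∀ p, p ≤ n → u p = nodeC G (elen G) e (i₀ + p) := by
  have key : ∀ p, p + 1 ≤ n →
      u p = nodeC G (elen G) e (i₀ + p) ∧ u (p+1) = nodeC G (elen G) e (i₀ + p + 1) := by
    intro p
    induction p with
    | zero => intro _; simpa using ⟨h0, h1⟩
    | succ k ihk =>
      intro hk
      obtain ⟨ih1, ih2⟩ := ihk (by omega)
      refine ⟨ih2, ?_⟩
      have hns1 : fstar G (u (k+1)) ≠ 0 := hns (k+1) (by omega) (by omega)
      rw [ih2] at hns1
      obtain ⟨hklt, hform⟩ := fnode_interior G hns1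
      have hadj1 := hadj (k+1) (by omega)
      rw [ih2, hform] at hadj1
      rcases interior_nbr G hadj1 with hc | hc
      · exfalso
        have : u (k+2) = u k := by
          rw [hc, ih1]; congr 1 <;> omega
        exact absurd (hinj _ (by omega) _ (by omega) this) (by omega)
      · rw [hc]; congr 1 <;> omega
  intro p hp
  cases p with
  | zero => exact h0
  | succ k => exact (key k (by omega)).2

lemma walk_desc {u : ℕ → Vtx G (elen G)} {n : ℕ} {e : EdgeT G} {i₀ : ℕ}
    (hadj : ∀ p, p + 1 ≤ n → (MC G (elen G)).Adj (u p) (u (p+1)))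
    (hinj : ∀ p, p ≤ n → ∀ q, q ≤ n → u p = u q → p = q)
    (hns : ∀ p, 1 ≤ p → p < n → fstar G (u p) ≠ 0)
    (hn : 1 ≤ n)
    (h0 : u 0 = nodeC G (elen G) e (i₀+1)) (h1 : u 1 = nodeC G (elen G) e i₀) :
    ∀ p, p ≤ n → p ≤ i₀ + 1 ∧ u p = nodeC G (elen G) e (i₀ + 1 - p) := by
  have key : ∀ p, p + 1 ≤ n →
      p ≤ i₀ ∧ u p = nodeC G (elen G) e (i₀ + 1 - p) ∧ u (p+1) = nodeC G (elen G) e (i₀ - p) := by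
    intro p
    induction p with
    | zero => intro _; simpa using ⟨h0, h1⟩
    | succ k ihk =>
      intro hk
      obtain ⟨hki, ih1, ih2⟩ := ihk (by omega)
      have hns1 : fstar G (u (k+1)) ≠ 0 := hns (k+1) (by omega) (by omega)
      rw [ih2] at hns1
      have hge1 : 1 ≤ i₀ - k := (fnode_ne0 G hns1).1
      refine ⟨by omega, by rw [ih2, show i₀ + 1 - (k+1) = i₀ - k by omega], ?_⟩
      obtain ⟨hklt, hform⟩ := fnode_interior G hns1
      have hadj1 := hadj (k+1) (by omega)
      rw [ih2, hform] at hadj1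
      rcases interior_nbr G hadj1 with hc | hc
      · rw [hc, show i₀ - k - 1 = i₀ - (k+1) by omega]
      · exfalso
        have : u (k+2) = u k := by
          rw [hc, ih1]; congr 1 <;> omega
        exact absurd (hinj _ (by omega) _ (by omega) this) (by omega)
  intro p hp
  cases p with
  | zero => exact ⟨by omega, h0⟩
  | succ k =>
    obtain ⟨hki, ih1, ih2⟩ := key k (by omega)
    exact ⟨by omega, by rw [ih2, show i₀ + 1 - (k+1) = i₀ - k by omega]⟩

end Walks

section Corridor
open Classical
variable {V : Type} [Fintype V] (G : SimpleGraph V)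

lemma corridor {t : ℕ} {v : ℕ → Vtx G (elen G)}
    (hpath : IsPathSeq (MC G (elen G)) (2*t) v) (ht : 1 ≤ t)
    {a b : ℕ} (hab : a < b) (hb2t : b ≤ 2*t - 1)
    (ha : fstar G (v a) = 0) (hb : fstar G (v b) = 0)
    (hmid : ∀ x, a < x → x < b → fstar G (v x) ≠ 0) :
    ∃ e : EdgeT G,
      (b - a = emid G e + 1 ∧ (∀ q ≤ b - a, v (a+q) = nodeC G (elen G) e q)) ∨
      (b - a = emid G e + 1 ∧ (∀ q ≤ b - a, v (a+q) = nodeC G (elen G) e (emid G e + 1 - q))) ∨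
      (b - a = elen G e - emid G e ∧ (∀ q ≤ b - a, v (a+q) = nodeC G (elen G) e (emid G e + 1 + q))) ∨
      (b - a = elen G e - emid G e ∧ (∀ q ≤ b - a, v (a+q) = nodeC G (elen G) e (elen G e + 1 - q))) := by
  obtain ⟨hwalk, hinj⟩ := hpath
  have h2t : b < 2*t := by omega
  have hb2 : a + 2 ≤ b := by
    by_contra hcon
    have hba : b = a + 1 := by omega
    apply no_adj_specials G (hwalk a (by omega)) ha
    rw [← hba]; exact hb
  have hns1 : fstar G (v (a+1)) ≠ 0 := hmid (a+1) (by omega) (by omega)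
  cases hva1 : v (a+1) with
  | inl u => rw [hva1] at hns1; exact absurd (fstar_inl G u) hns1
  | inr p =>
    obtain ⟨⟨e, k⟩, hk⟩ := p
    have hk2 : k < elen G e := hk
    have hadj0 : (MC G (elen G)).Adj (v (a+1)) (v a) := ((hwalk a (by omega))).symm
    rw [hva1] at hadj0
    have hme := emid_ge G e
    have hle := elen_emid G e
    -- common walk hypotheses for u p := v (a+p)
    have hadjU : ∀ p, p + 1 ≤ b - a → (MC G (elen G)).Adj (v (a+p)) (v (a+(p+1))) :=
      fun p hp => hwalk (a+p) (by omega)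
    have hinjU : ∀ p, p ≤ b - a → ∀ q, q ≤ b - a → v (a+p) = v (a+q) → p = q :=
      fun p hp q hq h => by
        have := hinj (a+p) (by omega) (a+q) (by omega) h; omega
    have hnsU : ∀ p, 1 ≤ p → p < b - a → fstar G (v (a+p)) ≠ 0 :=
      fun p h1 h2 => hmid (a+p) (by omega) (by omega)
    have hb0 : v (a + 0) = v a := rfl
    have hbend : a + (b - a) = b := by omega
    rcases interior_nbr G hadj0 with hcva | hcva
    · -- ascending : v a = node e k
      have hrun := walk_asc G hadjU hinjU hnsU (by omega)
        (by rw [hb0, hcva]) (by rw [hva1, inr_eq_nodeC G hk])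
      have hsk : fstar G (nodeC G (elen G) e k) = 0 := by rw [← hcva]; exact ha
      have hks := special_idx G (by omega) hsk
      have hintb : k + (b - a - 1) ≤ elen G e := by
        have h5 := hrun (b - a - 1) (by omega)
        have h6 : fstar G (v (a + (b-a-1))) ≠ 0 := hnsU _ (by omega) (by omega)
        rw [h5] at h6
        exact (fnode_ne0 G h6).2.1
      have hse : fstar G (nodeC G (elen G) e (k + (b-a))) = 0 := by
        rw [← hrun (b-a) le_rfl, hbend]; exact hb
      have hend := special_idx G (by omega) hse
      have hint : ∀ q, 1 ≤ q → q < b - a → fstar G (nodeC G (elen G) e (k+q)) ≠ 0 :=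
        fun q h1 h2 => by rw [← hrun q (by omega)]; exact hnsU q h1 h2
      have hknotend : k < elen G e := hk
      rcases hks with hk0 | hkm | hke
      · -- k = 0 : case C1
        subst hk0
        have hendm : 0 + (b - a) = emid G e + 1 := by
          rcases hend with h' | h' | h'
          · omega
          · exact h'
          · exfalso
            apply hint (emid G e + 1) (by omega) (by omega)
            simpa using fnode_mid G e
        refine ⟨e, Or.inl ⟨by omega, fun q hq => ?_⟩⟩
        have := hrun q hq
        rwa [Nat.zero_add] at this
      · -- k = mid + 1 : case C3
        have hendm : k + (b - a) = elen G e + 1 := by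
          rcases hend with h' | h' | h'
          · omega
          · omega
          · exact h'
        refine ⟨e, Or.inr (Or.inr (Or.inl ⟨by omega, fun q hq => ?_⟩))⟩
        have := hrun q hq
        rwa [hkm] at this
      · omega
    · -- descending : v a = node e (k+2)
      have hrun := walk_desc G hadjU hinjU hnsU (by omega)
        (by rw [hb0, hcva]) (by rw [hva1, inr_eq_nodeC G hk])
      have hsk : fstar G (nodeC G (elen G) e (k+2)) = 0 := by rw [← hcva]; exact ha
      have hks := special_idx G (by omega) hsk
      have hbd : b - a ≤ k + 2 := by
        have := (hrun (b-a) le_rfl).1; omega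
      have hse : fstar G (nodeC G (elen G) e (k + 2 - (b-a))) = 0 := by
        have h5 := (hrun (b-a) le_rfl).2
        rw [hbend] at h5
        rw [show k + 1 + 1 - (b - a) = k + 2 - (b-a) by omega] at h5
        rw [← h5]; exact hb
      have hend := special_idx G (by omega) hse
      have hint : ∀ q, 1 ≤ q → q < b - a → fstar G (nodeC G (elen G) e (k+2-q)) ≠ 0 :=
        fun q h1 h2 => by
          have h5 := (hrun q (by omega)).2
          rw [show k + 1 + 1 - q = k + 2 - q by omega] at h5
          rw [← h5]; exact hnsU q h1 h2
      rcases hks with hk0 | hkm | hke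
      · omega
      · -- k + 2 = mid + 1 : case C2
        have hendm : k + 2 - (b - a) = 0 := by
          rcases hend with h' | h' | h'
          · exact h'
          · omega
          · omega
        refine ⟨e, Or.inr (Or.inl ⟨by omega, fun q hq => ?_⟩)⟩
        have h5 := (hrun q hq).2
        rw [show k + 1 + 1 - q = emid G e + 1 - q by omega] at h5
        exact h5
      · -- k + 2 = elen + 1 : case C4
        have hendm : k + 2 - (b - a) = emid G e + 1 := by
          rcases hend with h' | h' | h'
          · exfalso
            apply hint (elen G e - emid G e) (by omega) (by omega)
            rw [show k + 2 - (elen G e - emid G e) = emid G e + 1 by omega]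
            exact fnode_mid G e
          · exact h'
          · omega
        refine ⟨e, Or.inr (Or.inr (Or.inr ⟨by omega, fun q hq => ?_⟩))⟩
        have h5 := (hrun q hq).2
        rw [show k + 1 + 1 - q = elen G e + 1 - q by omega] at h5
        exact h5

end Corridor

section Multi
open Classical
variable {V : Type} [Fintype V] (G : SimpleGraph V)

lemma emid_hlen (e : EdgeT G) : emid G e = hlen G (e, false) := rfl
lemma elen_hlen (e : EdgeT G) : elen G e - emid G e - 1 = hlen G (e, true) := by
  unfold elen emid; omega

lemma corridor_norm {v : ℕ → Vtx G (elen G)} {a b : ℕ} (hab : a + 2 ≤ b) {e : EdgeT G}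
    (hcor :
      (b - a = emid G e + 1 ∧ (∀ q ≤ b - a, v (a+q) = nodeC G (elen G) e q)) ∨
      (b - a = emid G e + 1 ∧ (∀ q ≤ b - a, v (a+q) = nodeC G (elen G) e (emid G e + 1 - q))) ∨
      (b - a = elen G e - emid G e ∧ (∀ q ≤ b - a, v (a+q) = nodeC G (elen G) e (emid G e + 1 + q))) ∨
      (b - a = elen G e - emid G e ∧ (∀ q ≤ b - a, v (a+q) = nodeC G (elen G) e (elen G e + 1 - q)))) :
    ∃ sd : Bool, b - a - 1 = hlen G (e, sd) ∧
      (∀ q, 1 ≤ q → q ≤ b - a - 1 → ∃ r, (if sd then emid G e + 2 else 1) ≤ r ∧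
        r ≤ (if sd then elen G e else emid G e) ∧ v (a+q) = nodeC G (elen G) e r) ∧
      (∀ r, (if sd then emid G e + 2 else 1) ≤ r → r ≤ (if sd then elen G e else emid G e) →
        ∃ q, 1 ≤ q ∧ q ≤ b - a - 1 ∧ v (a+q) = nodeC G (elen G) e r) := by
  have hme := emid_ge G e
  have hle := elen_emid G e
  rcases hcor with ⟨hg, hf⟩ | ⟨hg, hf⟩ | ⟨hg, hf⟩ | ⟨hg, hf⟩
  · refine ⟨false, by rw [← emid_hlen]; omega, ?_, ?_⟩
    · intro q h1 h2
      exact ⟨q, by simpa using h1, by simp; omega, hf q (by omega)⟩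
    · intro r h1 h2
      simp at h1 h2
      exact ⟨r, h1, by omega, hf r (by omega)⟩
  · refine ⟨false, by rw [← emid_hlen]; omega, ?_, ?_⟩
    · intro q h1 h2
      refine ⟨emid G e + 1 - q, by simp; omega, by simp; omega, hf q (by omega)⟩
    · intro r h1 h2
      simp at h1 h2
      refine ⟨emid G e + 1 - r, by omega, by omega, ?_⟩
      have := hf (emid G e + 1 - r) (by omega)
      rwa [show emid G e + 1 - (emid G e + 1 - r) = r by omega] at this
  · refine ⟨true, by rw [← elen_hlen]; omega, ?_, ?_⟩
    · intro q h1 h2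
      refine ⟨emid G e + 1 + q, by simp; omega, by simp; omega, hf q (by omega)⟩
    · intro r h1 h2
      simp at h1 h2
      refine ⟨r - emid G e - 1, by omega, by omega, ?_⟩
      have := hf (r - emid G e - 1) (by omega)
      rwa [show emid G e + 1 + (r - emid G e - 1) = r by omega] at this
  · refine ⟨true, by rw [← elen_hlen]; omega, ?_, ?_⟩
    · intro q h1 h2
      refine ⟨elen G e + 1 - q, by simp; omega, by simp; omega, hf q (by omega)⟩
    · intro r h1 h2
      simp at h1 h2
      refine ⟨elen G e + 1 - r, by omega, by omega, ?_⟩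
      have := hf (elen G e + 1 - r) (by omega)
      rwa [show elen G e + 1 - (elen G e + 1 - r) = r by omega] at this

lemma multi_case {t : ℕ} {v : ℕ → Vtx G (elen G)}
    (hpath : IsPathSeq (MC G (elen G)) (2*t) v) (ht : 1 ≤ t)
    {a b : ℕ} (hab : a < b) (hbt : b < t)
    (ha : fstar G (v a) = 0) (hb : fstar G (v b) = 0)
    (hat : fstar G (v (a+t)) = 0) (hbt' : fstar G (v (b+t)) = 0)
    (hmid1 : ∀ x, a < x → x < b → fstar G (v x) ≠ 0)
    (hmid2 : ∀ x, a + t < x → x < b + t → fstar G (v x) ≠ 0) : False := by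
  obtain ⟨e1, hcor1⟩ := corridor G hpath ht hab (by omega) ha hb hmid1
  obtain ⟨e2, hcor2⟩ := corridor G hpath ht (show a + t < b + t by omega) (by omega) hat hbt' hmid2
  have hab2 : a + 2 ≤ b := by
    rcases hcor1 with ⟨hg, _⟩ | ⟨hg, _⟩ | ⟨hg, _⟩ | ⟨hg, _⟩ <;>
      [skip; skip; skip; skip] <;>
      first
        | (have := emid_ge G e1; omega)
        | (have := elen_emid G e1; have := emid_ge G e1; omega)
  obtain ⟨sd1, hg1, hin1, hcov1⟩ := corridor_norm G hab2 hcor1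
  obtain ⟨sd2, hg2, hin2, hcov2⟩ := corridor_norm G (by omega) hcor2
  have hgap : b + t - (a + t) - 1 = b - a - 1 := by omega
  rw [hgap] at hg2
  have heq : ((e1, sd1) : EdgeT G × Bool) = (e2, sd2) := hlen_inj G (by omega)
  have he : e1 = e2 := (Prod.mk.injEq _ _ _ _).mp heq |>.1
  have hs : sd1 = sd2 := (Prod.mk.injEq _ _ _ _).mp heq |>.2
  subst he; subst hs
  have hglen : 2 ≤ hlen G (e1, sd1) := hlen_ge G _
  obtain ⟨r1, hr1a, hr1b, hr1⟩ := hin1 1 le_rfl (by omega)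
  obtain ⟨q', hq'1, hq'2, hq'⟩ := hcov2 r1 hr1a hr1b
  have hvv : v (a+1) = v (a + t + q') := by rw [hr1, hq']
  have := hpath.2 (a+1) (by omega) (a+t+q') (by omega) hvv
  omega

end Multi

section Tails
open Classical
variable {V : Type} [Fintype V] (G : SimpleGraph V)

lemma tails {t : ℕ} {v : ℕ → Vtx G (elen G)} {j : ℕ} {e : EdgeT G}
    (hpath : IsPathSeq (MC G (elen G)) (2*t) v)
    (hrep : RepetitivelyColoured (fstar G) t v)
    (ht2 : 2 ≤ t) (hj : j < t)
    (hspec : ∀ x, x < 2*t → (fstar G (v x) = 0 ↔ x = j ∨ x = j + t))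
    (hvj : ∃ u₀, v j = Sum.inl u₀)
    (hcor : ∀ q, 1 ≤ q → q ≤ t - 1 → fstar G (v (j+q)) = col3 (tau (q-1)))
    (hlen1 : tau (t - 2) ≠ tau 0)
    (hmidv : v (j+t) = nodeC G (elen G) e (emid G e + 1))
    (hprev : v (j+t-1) = nodeC G (elen G) e (emid G e) ∨
             v (j+t-1) = nodeC G (elen G) e (emid G e + 2)) : False := by
  obtain ⟨hwalk, hinj⟩ := hpath
  have hme := emid_ge G e
  have hle := elen_emid G e
  by_cases hj1 : 1 ≤ j
  · -- Tail A : look at v (j-1)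
    have hns : fstar G (v (j-1)) ≠ 0 := by
      intro h0
      rcases (hspec (j-1) (by omega)).mp h0 with h' | h' <;> omega
    cases hvj1 : v (j-1) with
    | inl u2 => rw [hvj1] at hns; exact absurd (fstar_inl G u2) hns
    | inr p =>
      obtain ⟨⟨e2, k2⟩, hk2⟩ := p
      have hk2' : k2 < elen G e2 := hk2
      have hme2 := emid_ge G e2
      have hle2 := elen_emid G e2
      obtain ⟨u₀, hu₀⟩ := hvj
      have hadj : (MC G (elen G)).Adj (v (j-1)) (v j) := by
        have h5 := hwalk (j-1) (by omega)
        rwa [show j-1+1 = j by omega] at h5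
      rw [hvj1] at hadj
      -- colour of v (j-1) is col3 (tau 0) in both cases
      have hcolA : fstar G (v (j-1)) = col3 (tau 0) := by
        rcases interior_nbr G hadj with hc | hc
        · -- v j = node e2 k2, an inl, so k2 = 0
          rw [hu₀] at hc
          obtain ⟨hk20, _⟩ := nodeC_inl_fst_elim G (show k2 ≤ elen G e2 by omega) hc.symm
          subst hk20
          rw [hvj1, inr_eq_nodeC G hk2', fnode_lo G (by omega) (by omega)]
        · -- v j = node e2 (k2+2), an inl, so k2 + 1 = elen e2
          rw [hu₀] at hc
          obtain ⟨hk2e, _⟩ := nodeC_inl_snd_elim G (show k2 + 1 ≤ elen G e2 by omega) hc.symm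
          rw [hvj1, inr_eq_nodeC G hk2', hk2e,
            fnode_hi G (by omega) (by omega), Nat.sub_self]
      -- repetition : f (v (j-1)) = f (v (j+t-1)) = col3 (tau (t-2))
      have hrep1 := hrep (j-1) (by omega)
      rw [show t + (j-1) = j + (t-1) by omega] at hrep1
      rw [hcolA, hcor (t-1) (by omega) (by omega)] at hrep1
      exact hlen1 (col3_tau_inj (by rw [show t - 1 - 1 = t - 2 by omega] at hrep1; exact hrep1.symm))
  · -- j = 0, so tail B : look at v (j+t+1)
    have hj0 : j = 0 := by omega
    have hb2t : j + t + 1 < 2*t := by omega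
    have hns : fstar G (v (j+t+1)) ≠ 0 := by
      intro h0
      rcases (hspec (j+t+1) (by omega)).mp h0 with h' | h' <;> omega
    have hadj : (MC G (elen G)).Adj (v (j+t)) (v (j+t+1)) := hwalk (j+t) (by omega)
    have hmlt : emid G e + 1 - 1 < elen G e := by omega
    have hform : v (j+t) = Sum.inr ⟨(e, emid G e + 1 - 1), hmlt⟩ := by
      rw [hmidv, nodeC_inr G (by omega) hmlt]
    rw [hform] at hadj
    have hdiff : v (j+t+1) ≠ v (j+t-1) := by
      intro h0
      have := hinj (j+t+1) (by omega) (j+t-1) (by omega) h0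
      omega
    have hmm : emid G e + 1 - 1 = emid G e := by omega
    rcases interior_nbr G hadj with hc | hc
    · -- v (j+t+1) = node e (emid e)
      rw [hmm] at hc
      rcases hprev with hp | hp
      · exact absurd (hc.trans hp.symm) hdiff
      · -- colour : col3 (tau (emid e - 1))
        have hcolB : fstar G (v (j+t+1)) = col3 (tau (emid G e - 1)) := by
          rw [hc, fnode_lo G (by omega) (by omega)]
        have hrep1 := hrep (j+1) (by omega)
        rw [show t + (j+1) = j + t + 1 by omega] at hrep1
        rw [hcolB, hcor 1 (by omega) (by omega)] at hrep1
        have := col3_tau_inj hrep1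
        exact hlen_tau G (e, false) (by rw [← emid_hlen]; simpa using this.symm)
    · -- v (j+t+1) = node e (emid e + 2)
      rw [hmm] at hc
      rcases hprev with hp | hp
      · -- colour : col3 (tau (elen e - emid e - 2))
        have hcolB : fstar G (v (j+t+1)) = col3 (tau (elen G e - (emid G e + 2))) := by
          rw [hc, fnode_hi G (by omega) (by omega)]
        have hrep1 := hrep (j+1) (by omega)
        rw [show t + (j+1) = j + t + 1 by omega] at hrep1
        rw [hcolB, hcor 1 (by omega) (by omega)] at hrep1
        have h6 := col3_tau_inj hrep1
        apply hlen_tau G (e, true)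
        rw [show hlen G (e, true) - 1 = elen G e - (emid G e + 2) by
          rw [← elen_hlen]; omega]
        simpa using h6.symm
      · exact absurd (hc.trans hp.symm) hdiff

end Tails

section OneCase
open Classical
variable {V : Type} [Fintype V] (G : SimpleGraph V)

lemma rev_path {W : Type} {M : SimpleGraph W} {t : ℕ} {v : ℕ → W}
    (hpath : IsPathSeq M (2*t) v) : IsPathSeq M (2*t) (fun i => v (2*t-1-i)) := by
  obtain ⟨hwalk, hinj⟩ := hpath
  constructor
  · intro i hi
    have h5 := (hwalk (2*t-2-i) (by omega)).symm
    rw [show 2*t-2-i+1 = 2*t-1-i by omega] at h5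
    simpa [show 2*t-1-(i+1) = 2*t-2-i by omega] using h5
  · intro i hi i' hi' h
    have := hinj (2*t-1-i) (by omega) (2*t-1-i') (by omega) h
    omega

lemma rev_rep {W C : Type} {f : W → C} {t : ℕ} {v : ℕ → W}
    (hrep : RepetitivelyColoured f t v) :
    RepetitivelyColoured f t (fun i => v (2*t-1-i)) := by
  intro i hi
  have h5 := hrep (t-1-i) (by omega)
  simp only []
  rw [show 2*t-1-i = t + (t-1-i) by omega, show 2*t-1-(t+i) = t-1-i by omega]
  exact h5.symm

lemma one_case {t : ℕ} {v : ℕ → Vtx G (elen G)} {j : ℕ}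
    (hpath : IsPathSeq (MC G (elen G)) (2*t) v)
    (hrep : RepetitivelyColoured (fstar G) t v)
    (ht2 : 2 ≤ t) (hj : j < t)
    (hspec : ∀ x, x < 2*t → (fstar G (v x) = 0 ↔ x = j ∨ x = j + t)) : False := by
  have ha : fstar G (v j) = 0 := (hspec j (by omega)).mpr (Or.inl rfl)
  have hb : fstar G (v (j+t)) = 0 := (hspec (j+t) (by omega)).mpr (Or.inr rfl)
  have hmid : ∀ x, j < x → x < j + t → fstar G (v x) ≠ 0 := by
    intro x h1 h2 h0
    rcases (hspec x (by omega)).mp h0 with h' | h' <;> omega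
  obtain ⟨e, hcor⟩ := corridor G hpath (by omega) (show j < j + t by omega) (by omega) ha hb hmid
  rw [show j + t - j = t by omega] at hcor
  have hme := emid_ge G e
  have hle := elen_emid G e
  rcases hcor with ⟨hg, hf⟩ | ⟨hg, hf⟩ | ⟨hg, hf⟩ | ⟨hg, hf⟩
  · -- C1 : apply tails directly
    apply tails G ⟨hpath.1, hpath.2⟩ hrep ht2 hj hspec (e := e)
    · refine ⟨e.1.1, ?_⟩
      have h5 : v j = nodeC G (elen G) e 0 := hf 0 (by omega)
      rw [h5, nodeC_zero]
    · intro q h1 h2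
      rw [hf q (by omega), fnode_lo G h1 (by omega)]
    · have := hlen_tau G (e, false)
      rw [← emid_hlen] at this
      rwa [show t - 2 = emid G e - 1 by omega]
    · rw [hf t (by omega)]; congr 1 <;> omega
    · left
      rw [show j + t - 1 = j + (t-1) by omega, hf (t-1) (by omega)]
      congr 1 <;> omega
  · -- C2 : reverse, becomes C1 shape
    apply tails G (rev_path hpath) (rev_rep hrep) ht2 (show t-1-j < t by omega) (e := e)
    · intro x hx
      show fstar G (v (2*t-1-x)) = 0 ↔ _
      rw [hspec (2*t-1-x) (by omega)]
      omega
    · refine ⟨e.1.1, ?_⟩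
      show v (2*t-1-(t-1-j)) = _
      rw [show 2*t-1-(t-1-j) = j + t by omega, hf t (by omega),
        show emid G e + 1 - t = 0 by omega, nodeC_zero]
    · intro q h1 h2
      show fstar G (v (2*t-1-(t-1-j+q))) = _
      rw [show 2*t-1-(t-1-j+q) = j + (t - q) by omega, hf (t-q) (by omega),
        show emid G e + 1 - (t-q) = q by omega, fnode_lo G h1 (by omega)]
    · have := hlen_tau G (e, false)
      rw [← emid_hlen] at this
      rwa [show t - 2 = emid G e - 1 by omega]
    · show v (2*t-1-(t-1-j+t)) = _
      rw [show 2*t-1-(t-1-j+t) = j + 0 by omega, hf 0 (by omega),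
        show emid G e + 1 - 0 = emid G e + 1 by omega]
    · left
      show v (2*t-1-(t-1-j+t-1)) = _
      rw [show 2*t-1-(t-1-j+t-1) = j + 1 by omega, hf 1 (by omega),
        show emid G e + 1 - 1 = emid G e by omega]
  · -- C3 : reverse, becomes C4 shape
    apply tails G (rev_path hpath) (rev_rep hrep) ht2 (show t-1-j < t by omega) (e := e)
    · intro x hx
      show fstar G (v (2*t-1-x)) = 0 ↔ _
      rw [hspec (2*t-1-x) (by omega)]
      omega
    · refine ⟨e.1.2, ?_⟩
      show v (2*t-1-(t-1-j)) = _
      rw [show 2*t-1-(t-1-j) = j + t by omega, hf t (by omega),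
        nodeC_snd G (by omega)]
    · intro q h1 h2
      show fstar G (v (2*t-1-(t-1-j+q))) = _
      rw [show 2*t-1-(t-1-j+q) = j + (t - q) by omega, hf (t-q) (by omega),
        fnode_hi G (by omega) (by omega),
        show elen G e - (emid G e + 1 + (t - q)) = q - 1 by omega]
    · have := hlen_tau G (e, true)
      rw [← elen_hlen] at this
      rwa [show t - 2 = elen G e - emid G e - 1 - 1 by omega]
    · show v (2*t-1-(t-1-j+t)) = _
      rw [show 2*t-1-(t-1-j+t) = j + 0 by omega, hf 0 (by omega)]
      all_goals (congr 1 <;> omega)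
    · right
      show v (2*t-1-(t-1-j+t-1)) = _
      rw [show 2*t-1-(t-1-j+t-1) = j + 1 by omega, hf 1 (by omega)]
      all_goals (congr 1 <;> omega)
  · -- C4 : apply tails directly
    apply tails G ⟨hpath.1, hpath.2⟩ hrep ht2 hj hspec (e := e)
    · refine ⟨e.1.2, ?_⟩
      have h5 : v j = nodeC G (elen G) e (elen G e + 1 - 0) := hf 0 (by omega)
      rw [h5, show elen G e + 1 - 0 = elen G e + 1 by omega, nodeC_snd G (by omega)]
    · intro q h1 h2
      rw [hf q (by omega), fnode_hi G (by omega) (by omega),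
        show elen G e - (elen G e + 1 - q) = q - 1 by omega]
    · have := hlen_tau G (e, true)
      rw [← elen_hlen] at this
      rwa [show t - 2 = elen G e - emid G e - 1 - 1 by omega]
    · rw [hf t (by omega)]; congr 1 <;> omega
    · right
      rw [show j + t - 1 = j + (t-1) by omega, hf (t-1) (by omega)]
      congr 1 <;> omega

end OneCase

section ZeroMain
open Classical
variable {V : Type} [Fintype V] (G : SimpleGraph V)

lemma zero_case {t : ℕ} {v : ℕ → Vtx G (elen G)}
    (hpath : IsPathSeq (MC G (elen G)) (2*t) v)
    (hrep : RepetitivelyColoured (fstar G) t v)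
    (ht : 1 ≤ t)
    (hns : ∀ x, x < 2*t → fstar G (v x) ≠ 0) : False := by
  obtain ⟨hwalk, hinj⟩ := hpath
  cases hv0 : v 0 with
  | inl u => exact absurd (fstar_inl G u) (hv0 ▸ hns 0 (by omega))
  | inr p =>
    obtain ⟨⟨e, k⟩, hk⟩ := p
    have hk2 : k < elen G e := hk
    have hme := emid_ge G e
    have hle := elen_emid G e
    have hadj : (MC G (elen G)).Adj (v 0) (v 1) := hwalk 0 (by omega)
    rw [hv0] at hadj
    have hadjU : ∀ p, p + 1 ≤ 2*t-1 → (MC G (elen G)).Adj (v p) (v (p+1)) :=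
      fun p hp => hwalk p (by omega)
    have hinjU : ∀ p, p ≤ 2*t-1 → ∀ q, q ≤ 2*t-1 → v p = v q → p = q :=
      fun p hp q hq h => hinj p (by omega) q (by omega) h
    have hnsU : ∀ p, 1 ≤ p → p < 2*t-1 → fstar G (v p) ≠ 0 :=
      fun p h1 h2 => hns p (by omega)
    rcases interior_nbr G hadj with hc | hc
    · -- descending : v 1 = node e k
      have hrun := walk_desc G hadjU hinjU hnsU (by omega)
        (by rw [hv0, inr_eq_nodeC G hk2]) hc
      have hfact : ∀ p, p ≤ 2*t-1 → 1 ≤ k+1-p ∧ k+1-p ≤ elen G e ∧ k+1-p ≠ emid G e + 1 := by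
        intro p hp
        have h5 := (hrun p hp).2
        have h6 := hns p (by omega)
        rw [h5] at h6
        exact fnode_ne0 G h6
      have hkbig : 2*t-1 ≤ k := by
        have := hfact (2*t-1) le_rfl
        omega
      by_cases hside : k + 1 ≤ emid G e
      · -- low side, descending : colour col3 (tau (k - p))
        have hcol : ∀ p, p ≤ 2*t-1 → fstar G (v p) = col3 (tau (k - p)) := by
          intro p hp
          rw [(hrun p hp).2, fnode_lo G (by omega) (by omega)]
          congr 2
          omega
        apply tau_sqfree_rev k t ht hkbig
        intro i hi
        have h5 := hrep i (by omega)
        rw [hcol i (by omega), hcol (t+i) (by omega)] at h5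
        have := col3_tau_inj h5
        rwa [show k - (t+i) = k - t - i by omega] at this
      · -- high side, descending : need all indices ≥ mid+2
        have hhigh : ∀ p, p ≤ 2*t-1 → emid G e + 2 ≤ k+1-p := by
          intro p hp
          by_contra hcon
          have h5 := hfact p hp
          have hp' : k - emid G e ≤ p := by omega
          have h6 := hfact (k - emid G e) (by omega)
          omega
        have hcol : ∀ p, p ≤ 2*t-1 → fstar G (v p) = col3 (tau (elen G e - k - 1 + p)) := by
          intro p hp
          rw [(hrun p hp).2, fnode_hi G (hhigh p hp) (hfact p hp).2.1]
          congr 2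
          have := hfact p hp
          omega
        apply tau_sqfree (elen G e - k - 1) t ht
        intro i hi
        have h5 := hrep i (by omega)
        rw [hcol i (by omega), hcol (t+i) (by omega)] at h5
        have := col3_tau_inj h5
        rwa [show elen G e - k - 1 + (t+i) = elen G e - k - 1 + t + i by omega] at this
    · -- ascending : v 1 = node e (k+2)
      have hrun := walk_asc G hadjU hinjU hnsU (by omega)
        (by rw [hv0, inr_eq_nodeC G hk2]) hc
      have hfact : ∀ p, p ≤ 2*t-1 → k+1+p ≤ elen G e ∧ k+1+p ≠ emid G e + 1 := by
        intro p hp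
        have h5 := hrun p hp
        have h6 := hns p (by omega)
        rw [h5] at h6
        have := fnode_ne0 G h6
        omega
      by_cases hside : k + 1 ≤ emid G e
      · have hlow : ∀ p, p ≤ 2*t-1 → k+1+p ≤ emid G e := by
          intro p hp
          by_contra hcon
          have h6 := hfact (emid G e - k) (by omega)
          omega
        have hcol : ∀ p, p ≤ 2*t-1 → fstar G (v p) = col3 (tau (k + p)) := by
          intro p hp
          rw [hrun p hp, fnode_lo G (by omega) (hlow p hp)]
          congr 2
          omega
        apply tau_sqfree k t ht
        intro i hi
        have h5 := hrep i (by omega)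
        rw [hcol i (by omega), hcol (t+i) (by omega)] at h5
        have := col3_tau_inj h5
        rwa [show k + (t+i) = k + t + i by omega] at this
      · have hhigh : ∀ p, p ≤ 2*t-1 → emid G e + 2 ≤ k+1+p := by
          intro p hp
          have := hfact 0 (by omega)
          omega
        have hcol : ∀ p, p ≤ 2*t-1 → fstar G (v p) = col3 (tau (elen G e - k - 1 - p)) := by
          intro p hp
          rw [hrun p hp, fnode_hi G (hhigh p hp) (hfact p hp).1]
          congr 2
          have := hfact p hp
          omega
        apply tau_sqfree_rev (elen G e - k - 1) t ht
        · have := hfact (2*t-1) le_rfl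
          omega
        · intro i hi
          have h5 := hrep i (by omega)
          rw [hcol i (by omega), hcol (t+i) (by omega)] at h5
          have := col3_tau_inj h5
          rwa [show elen G e - k - 1 - (t+i) = elen G e - k - 1 - t - i by omega] at this

theorem main_nonrep : PathNonrepetitive (MC G (elen G)) (fstar G) := by
  intro t v ht hpath hrep
  have hshift : ∀ x, t ≤ x → x < 2*t → fstar G (v x) = fstar G (v (x - t)) := by
    intro x h1 h2
    have h5 := hrep (x-t) (by omega)
    rw [show t + (x-t) = x by omega] at h5
    exact h5.symm
  classical
  set J := (Finset.range t).filter (fun i => fstar G (v i) = 0) with hJdef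
  have hmemJ : ∀ x, x ∈ J ↔ (x < t ∧ fstar G (v x) = 0) := by
    intro x
    rw [hJdef, Finset.mem_filter, Finset.mem_range]
  by_cases h0 : J = ∅
  · apply zero_case G hpath hrep ht
    intro x hx h5
    by_cases hxt : x < t
    · have : x ∈ J := (hmemJ x).mpr ⟨hxt, h5⟩
      rw [h0] at this
      simp at this
    · rw [hshift x (by omega) hx] at h5
      have : x - t ∈ J := (hmemJ (x-t)).mpr ⟨by omega, h5⟩
      rw [h0] at this
      simp at this
  · by_cases h1 : J.card = 1
    · obtain ⟨j, hj⟩ := Finset.card_eq_one.mp h1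
      have hjJ : j ∈ J := by rw [hj]; exact Finset.mem_singleton_self j
      have hjt : j < t := ((hmemJ j).mp hjJ).1
      have hspec : ∀ x, x < 2*t → (fstar G (v x) = 0 ↔ x = j ∨ x = j + t) := by
        intro x hx
        constructor
        · intro h5
          by_cases hxt : x < t
          · have : x ∈ J := (hmemJ x).mpr ⟨hxt, h5⟩
            rw [hj] at this
            left; exact Finset.mem_singleton.mp this
          · rw [hshift x (by omega) hx] at h5
            have : x - t ∈ J := (hmemJ (x-t)).mpr ⟨by omega, h5⟩
            rw [hj] at this
            right
            have := Finset.mem_singleton.mp this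
            omega
        · intro h5
          rcases h5 with h5 | h5 <;> rw [h5]
          · exact ((hmemJ j).mp hjJ).2
          · rw [hshift (j+t) (by omega) (by omega), show j + t - t = j by omega]
            exact ((hmemJ j).mp hjJ).2
      by_cases ht2 : 2 ≤ t
      · exact one_case G hpath hrep ht2 hjt hspec
      · -- t = 1 : the two specials are adjacent
        have ht1 : t = 1 := by omega
        have hj0 : j = 0 := by omega
        have hs0 : fstar G (v j) = 0 := (hspec j (by omega)).mpr (Or.inl rfl)
        have hs1 : fstar G (v (j+t)) = 0 := (hspec (j+t) (by omega)).mpr (Or.inr rfl)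
        rw [hj0, ht1] at hs1
        rw [hj0] at hs0
        exact no_adj_specials G (hpath.1 0 (by omega)) hs0 (by simpa using hs1)
    · -- at least two specials in [0, t)
      have hcard : 2 ≤ J.card := by
        have h2 : J.card ≠ 0 := fun hc => h0 (Finset.card_eq_zero.mp hc)
        omega
      have hne : J.Nonempty := Finset.nonempty_of_ne_empty h0
      set a := J.min' hne with ha_def
      have haJ : a ∈ J := J.min'_mem hne
      have hne2 : (J.erase a).Nonempty := by
        rw [← Finset.card_pos, Finset.card_erase_of_mem haJ]
        omega
      set b := (J.erase a).min' hne2 with hb_def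
      have hbJ' : b ∈ J.erase a := (J.erase a).min'_mem hne2
      have hbJ : b ∈ J := Finset.mem_of_mem_erase hbJ'
      have hba : b ≠ a := Finset.ne_of_mem_erase hbJ'
      have hab : a < b := lt_of_le_of_ne (J.min'_le b hbJ) (Ne.symm hba)
      have hbt : b < t := ((hmemJ b).mp hbJ).1
      have hmid1 : ∀ x, a < x → x < b → fstar G (v x) ≠ 0 := by
        intro x h1 h2 h5
        have hxJ : x ∈ J := (hmemJ x).mpr ⟨by omega, h5⟩
        have hxJ' : x ∈ J.erase a := Finset.mem_erase.mpr ⟨by omega, hxJ⟩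
        have := (J.erase a).min'_le x hxJ'
        omega
      apply multi_case G hpath ht hab hbt ((hmemJ a).mp haJ).2 ((hmemJ b).mp hbJ).2
      · rw [hshift (a+t) (by omega) (by omega), show a + t - t = a by omega]
        exact ((hmemJ a).mp haJ).2
      · rw [hshift (b+t) (by omega) (by omega), show b + t - t = b by omega]
        exact ((hmemJ b).mp hbJ).2
      · exact hmid1
      · intro x h1 h2 h5
        rw [hshift x (by omega) (by omega)] at h5
        exact hmid1 (x-t) (by omega) (by omega) h5

end ZeroMain

section Build
open Classical
variable {V : Type} [Fintype V] (G : SimpleGraph V)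

lemma base_iso {c : EdgeT G → ℕ} (h0 : ∀ e, c e = 0) : Nonempty (G ≃g MC G c) := by
  haveI : IsEmpty {p : EdgeT G × ℕ // p.2 < c p.1} := by
    constructor
    intro p
    have := p.2
    rw [h0] at this
    omega
  refine ⟨{ toEquiv := (Equiv.sumEmpty V {p : EdgeT G × ℕ // p.2 < c p.1}).symm,
            map_rel_iff' := ?_ }⟩
  intro a b
  show (MC G c).Adj (Sum.inl a) (Sum.inl b) ↔ G.Adj a b
  rw [MC_adj]
  constructor
  · rintro ⟨hne, ⟨e, i, hi, h1, h2⟩ | ⟨e, i, hi, h1, h2⟩⟩ <;>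
    · have hi0 : i = 0 := by have := h0 e; omega
      subst hi0
      rw [nodeC_zero] at h1
      rw [nodeC_snd G (by simp [h0])] at h2
      have e1 := (Sum.inl.injEq _ _).mp h1
      have e2 := (Sum.inl.injEq _ _).mp h2
      rw [e1, e2]
      first
        | exact e.2.1
        | exact e.2.1.symm
  · intro hadj
    refine ⟨fun h => hadj.ne ((Sum.inl.injEq _ _).mp h), ?_⟩
    rcases lt_trichotomy (vemb a) (vemb b) with hlt | heq | hgt
    · left
      refine ⟨⟨(a, b), hadj, hlt⟩, 0, by omega, ?_, ?_⟩
      · rw [nodeC_zero]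
      · rw [nodeC_snd G (by simp [h0])]
    · exact absurd (vemb_inj heq) hadj.ne
    · right
      refine ⟨⟨(b, a), hadj.symm, hgt⟩, 0, by omega, ?_, ?_⟩
      · rw [nodeC_zero]
      · rw [nodeC_snd G (by simp [h0])]

lemma subdiv_iso {A B : Type} {H : SimpleGraph A} {K : SimpleGraph B} (φ : H ≃g K)
    (u w : A) : Nonempty (subdivideEdge H u w ≃g subdivideEdge K (φ u) (φ w)) := by
  refine ⟨{ toEquiv := φ.toEquiv.optionCongr, map_rel_iff' := ?_ }⟩
  intro a b
  show (subdivideEdge K (φ u) (φ w)).Adj (Option.map φ a) (Option.map φ b) ↔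
    (subdivideEdge H u w).Adj a b
  have hinj : ∀ x y : A, (φ x = φ y) ↔ x = y :=
    fun x y => ⟨fun h => φ.injective h, fun h => by rw [h]⟩
  have hadji : ∀ x y : A, K.Adj (φ x) (φ y) ↔ H.Adj x y := fun x y => φ.map_adj_iff
  cases a <;> cases b <;>
    simp [subdivideEdge, SimpleGraph.fromRel_adj, hinj, hadji]

end Build

section Step
open Classical
variable {V : Type} [Fintype V] (G : SimpleGraph V)

variable (c : EdgeT G → ℕ) (e₀ : EdgeT G)

def stepMap : Option (Vtx G c) → Vtx G (Function.update c e₀ (c e₀ + 1)) :=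
  fun a => match a with
  | none => Sum.inr ⟨(e₀, c e₀), by simp⟩
  | some (Sum.inl x) => Sum.inl x
  | some (Sum.inr p) => Sum.inr ⟨p.1, by
      have hp := p.2
      rw [Function.update_apply]
      split
      · next h => rw [h] at hp; omega
      · exact hp⟩

lemma update_self' : Function.update c e₀ (c e₀ + 1) e₀ = c e₀ + 1 := by simp

lemma update_ne' {e : EdgeT G} (he : e ≠ e₀) :
    Function.update c e₀ (c e₀ + 1) e = c e := Function.update_of_ne he _ _

lemma stepMap_inj : Function.Injective (stepMap G c e₀) := by
  intro a b h
  match a, b with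
  | none, none => rfl
  | none, some (Sum.inl y) => exact absurd h (by simp [stepMap])
  | some (Sum.inl x), none => exact absurd h (by simp [stepMap])
  | none, some (Sum.inr ⟨(e',k'), hk'⟩) =>
    exfalso
    have hk2 : k' < c e' := hk'
    have h3 : ((e₀, c e₀) : EdgeT G × ℕ) = (e', k') :=
      by simpa [stepMap] using h
    rw [Prod.mk.injEq] at h3
    obtain ⟨h4, h5⟩ := h3
    rw [← h4, ← h5] at hk2
    omega
  | some (Sum.inr ⟨(e',k'), hk'⟩), none =>
    exfalso
    have hk2 : k' < c e' := hk'
    have h3 : ((e', k') : EdgeT G × ℕ) = (e₀, c e₀) :=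
      by simpa [stepMap] using h
    rw [Prod.mk.injEq] at h3
    obtain ⟨h4, h5⟩ := h3
    rw [h4, h5] at hk2
    omega
  | some (Sum.inl x), some (Sum.inl y) =>
    simp only [stepMap] at h
    rw [(Sum.inl.injEq (α := V) (β := {p : EdgeT G × ℕ // p.2 < Function.update c e₀ (c e₀ + 1) p.1}) _ _).mp h]
  | some (Sum.inl x), some (Sum.inr p) => exact absurd h (by simp [stepMap])
  | some (Sum.inr p), some (Sum.inl y) => exact absurd h (by simp [stepMap])
  | some (Sum.inr ⟨(e,k), hk⟩), some (Sum.inr ⟨(e',k'), hk'⟩) =>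
    have h3 : ((e, k) : EdgeT G × ℕ) = (e', k') :=
      by simpa [stepMap] using h
    have h4 : (⟨(e,k), hk⟩ : {p : EdgeT G × ℕ // p.2 < c p.1}) = ⟨(e',k'), hk'⟩ :=
      Subtype.ext h3
    rw [h4]

lemma stepMap_surj : Function.Surjective (stepMap G c e₀) := by
  intro x
  rcases x with u | ⟨⟨e,k⟩, hk⟩
  · exact ⟨some (Sum.inl u), rfl⟩
  · by_cases he : e = e₀
    · subst he
      rw [update_self'] at hk
      by_cases hke : k = c e
      · subst hke
        exact ⟨none, rfl⟩
      · have hk2 : k < c e := by omega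
        exact ⟨some (Sum.inr ⟨(e, k), hk2⟩), rfl⟩
    · rw [update_ne' G c e₀ he] at hk
      exact ⟨some (Sum.inr ⟨(e, k), hk⟩), rfl⟩

lemma stepMap_node_ne {e : EdgeT G} (he : e ≠ e₀) (i : ℕ) :
    stepMap G c e₀ (some (nodeC G c e i)) =
      nodeC G (Function.update c e₀ (c e₀ + 1)) e i := by
  unfold nodeC
  by_cases h0 : i = 0
  · rw [if_pos h0, if_pos h0]; rfl
  · rw [if_neg h0, if_neg h0]
    by_cases h1 : i - 1 < c e
    · rw [dif_pos h1, dif_pos (show i - 1 < Function.update c e₀ (c e₀+1) e by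
        rw [update_ne' G c e₀ he]; exact h1)]
      rfl
    · rw [dif_neg h1, dif_neg (show ¬ i - 1 < Function.update c e₀ (c e₀+1) e by
        rw [update_ne' G c e₀ he]; exact h1)]
      rfl

lemma stepMap_node_le {i : ℕ} (hi : i ≤ c e₀) :
    stepMap G c e₀ (some (nodeC G c e₀ i)) =
      nodeC G (Function.update c e₀ (c e₀ + 1)) e₀ i := by
  unfold nodeC
  by_cases h0 : i = 0
  · rw [if_pos h0, if_pos h0]; rfl
  · rw [if_neg h0, if_neg h0]
    have h1 : i - 1 < c e₀ := by omega
    rw [dif_pos h1, dif_pos (show i - 1 < Function.update c e₀ (c e₀+1) e₀ by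
      rw [update_self']; omega)]
    rfl

lemma stepMap_none :
    stepMap G c e₀ none = nodeC G (Function.update c e₀ (c e₀ + 1)) e₀ (c e₀ + 1) := by
  rw [nodeC_inr G (by omega) (show c e₀ + 1 - 1 < Function.update c e₀ (c e₀+1) e₀ by
    rw [update_self']; omega)]
  rfl

lemma stepMap_B :
    stepMap G c e₀ (some (nodeC G c e₀ (c e₀ + 1))) =
      nodeC G (Function.update c e₀ (c e₀ + 1)) e₀ (c e₀ + 2) := by
  rw [nodeC_snd G (by omega),
    nodeC_snd G (show Function.update c e₀ (c e₀+1) e₀ + 1 ≤ c e₀ + 2 by rw [update_self'])]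
  rfl

lemma AB_adj : (MC G c).Adj (nodeC G c e₀ (c e₀)) (nodeC G c e₀ (c e₀ + 1)) := by
  rw [MC_adj]
  refine ⟨?_, Or.inl ⟨e₀, c e₀, le_rfl, rfl, rfl⟩⟩
  intro h
  have := nodeC_inj_idx G (by omega) (by omega) h
  omega

lemma step_iso :
    Nonempty ((subdivideEdge (MC G c) (nodeC G c e₀ (c e₀)) (nodeC G c e₀ (c e₀ + 1))) ≃g
      MC G (Function.update c e₀ (c e₀ + 1))) := by
  set c' := Function.update c e₀ (c e₀ + 1) with hc'
  set A := nodeC G c e₀ (c e₀) with hA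
  set B := nodeC G c e₀ (c e₀ + 1) with hB
  set f := stepMap G c e₀ with hf
  refine ⟨{ toEquiv := Equiv.ofBijective f ⟨stepMap_inj G c e₀, stepMap_surj G c e₀⟩,
            map_rel_iff' := ?_ }⟩
  intro a b
  show (MC G c').Adj (f a) (f b) ↔ (subdivideEdge (MC G c) A B).Adj a b
  rw [MC_adj]
  unfold subdivideEdge
  rw [SimpleGraph.fromRel_adj]
  have hne_iff : f a ≠ f b ↔ a ≠ b := by
    constructor
    · intro h hab; exact h (by rw [hab])
    · intro h hab; exact h (stepMap_inj G c e₀ hab)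
  -- forward mapper for the subdivision relation
  have relmap : ∀ x y : Vtx G c, relC G c x y → ¬(x = A ∧ y = B) → ¬(x = B ∧ y = A) →
      relC G c' (f (some x)) (f (some y)) := by
    rintro x y ⟨e, i, hi, hx, hy⟩ hxAB hxBA
    by_cases he : e = e₀
    · subst he
      have hilt : i < c e := by
        rcases Nat.lt_or_ge i (c e) with h' | h'
        · exact h'
        · exfalso
          have hie : i = c e := by omega
          exact hxAB ⟨by rw [hx, hie], by rw [hy, hie]⟩
      refine ⟨e, i, ?_, ?_, ?_⟩
      · rw [hc', update_self']; omega
      · rw [hx, hf, stepMap_node_le G c e (by omega)]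
      · rw [hy, hf, stepMap_node_le G c e (by omega)]
    · refine ⟨e, i, ?_, ?_, ?_⟩
      · rw [hc', update_ne' G c e₀ he]; exact hi
      · rw [hx, hf, stepMap_node_ne G c e₀ he]
      · rw [hy, hf, stepMap_node_ne G c e₀ he]
  -- backward mapper
  have relback : ∀ a b : Option (Vtx G c), relC G c' (f a) (f b) →
      ((∃ x y, a = some x ∧ b = some y ∧ (MC G c).Adj x y ∧
        ¬(x = A ∧ y = B) ∧ ¬(x = B ∧ y = A)) ∨ (a = none ∧ (b = some A ∨ b = some B))) ∨
      ((∃ x y, b = some x ∧ a = some y ∧ (MC G c).Adj x y ∧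
        ¬(x = A ∧ y = B) ∧ ¬(x = B ∧ y = A)) ∨ (b = none ∧ (a = some A ∨ a = some B))) := by
    rintro a b ⟨e, i, hi, h1, h2⟩
    by_cases he : e = e₀
    · subst he
      rw [hc', update_self'] at hi
      by_cases hi1 : i + 1 ≤ c e
      · -- interior edge of e₀ untouched
        have ha : a = some (nodeC G c e i) :=
          stepMap_inj G c e (h1.trans (stepMap_node_le G c e (by omega)).symm)
        have hb : b = some (nodeC G c e (i+1)) :=
          stepMap_inj G c e (h2.trans (stepMap_node_le G c e (by omega)).symm)
        left; left
        refine ⟨_, _, ha, hb, ?_, ?_, ?_⟩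
        · rw [MC_adj]
          refine ⟨?_, Or.inl ⟨e, i, by omega, rfl, rfl⟩⟩
          intro h
          have := nodeC_inj_idx G (e := e) (i := i) (j := i + 1) (by omega) (by omega) h
          omega
        · rintro ⟨hx, hy⟩
          rw [hA] at hx
          have := nodeC_inj_idx G (e := e) (i := i) (j := c e) (by omega) (by omega) hx
          omega
        · rintro ⟨hx, hy⟩
          rw [hB] at hx
          have := nodeC_inj_idx G (e := e) (i := i) (j := c e + 1) (by omega) (by omega) hx
          omega
      · by_cases hi2 : i = c e
        · -- a = some A, b = none
          have k1 : stepMap G c e (some A) = nodeC G c' e i := by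
            rw [hA, hi2]
            exact stepMap_node_le G c e le_rfl
          have ha : a = some A := stepMap_inj G c e (h1.trans k1.symm)
          have k2 : stepMap G c e none = nodeC G c' e (i+1) := by
            rw [show i + 1 = c e + 1 by omega]
            exact stepMap_none G c e
          have hb : b = none := stepMap_inj G c e (h2.trans k2.symm)
          right; right
          exact ⟨hb, Or.inl ha⟩
        · -- i = c e + 1 : a = none, b = some B
          have hi3 : i = c e + 1 := by omega
          have k1 : stepMap G c e none = nodeC G c' e i := by
            rw [hi3]
            exact stepMap_none G c e
          have ha : a = none := stepMap_inj G c e (h1.trans k1.symm)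
          have k2 : stepMap G c e (some B) = nodeC G c' e (i+1) := by
            rw [hB, show i + 1 = c e + 2 by omega]
            exact stepMap_B G c e
          have hb : b = some B := stepMap_inj G c e (h2.trans k2.symm)
          left; right
          exact ⟨ha, Or.inr hb⟩
    · -- e ≠ e₀
      rw [hc', update_ne' G c e₀ he] at hi
      have ha : a = some (nodeC G c e i) :=
        stepMap_inj G c e₀ (h1.trans (stepMap_node_ne G c e₀ he i).symm)
      have hb : b = some (nodeC G c e (i+1)) :=
        stepMap_inj G c e₀ (h2.trans (stepMap_node_ne G c e₀ he (i+1)).symm)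
      left; left
      refine ⟨_, _, ha, hb, ?_, ?_, ?_⟩
      · rw [MC_adj]
        refine ⟨?_, Or.inl ⟨e, i, hi, rfl, rfl⟩⟩
        intro h
        have := nodeC_inj_idx G (e := e) (i := i) (j := i + 1) (by omega) (by omega) h
        omega
      · rintro ⟨hx, hy⟩
        rw [hA] at hx; rw [hB] at hy
        by_cases hm : 1 ≤ c e₀
        · have hA' : nodeC G c e₀ (c e₀) =
              Sum.inr ⟨(e₀, c e₀ - 1), show c e₀ - 1 < c e₀ by omega⟩ :=
            nodeC_inr G (c := c) (e := e₀) (i := c e₀) (by omega)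
              (show c e₀ - 1 < c e₀ by omega)
          rw [hA'] at hx
          exact he (nodeC_inr_elim G hx).1.symm
        · have h00 : c e₀ = 0 := by omega
          rw [h00, nodeC_zero] at hx
          rw [nodeC_snd G (c := c) (e := e₀) (i := c e₀ + 1) (by omega)] at hy
          obtain ⟨hi0, hu1⟩ :=
            nodeC_inl_fst_elim G (c := c) (e := e) (i := i) (by omega) hx
          obtain ⟨hie, hu2⟩ :=
            nodeC_inl_snd_elim G (c := c) (e := e) (i := i) (by omega) hy
          apply he
          apply Subtype.ext
          exact Prod.ext hu1.symm hu2.symm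
      · rintro ⟨hx, hy⟩
        rw [hB] at hx; rw [hA] at hy
        rw [nodeC_snd G (c := c) (e := e₀) (i := c e₀ + 1) (by omega)] at hx
        obtain ⟨hi0, hu1⟩ :=
          nodeC_inl_fst_elim G (c := c) (e := e) (i := i) (by omega) hx
        by_cases hm : 1 ≤ c e₀
        · have hA' : nodeC G c e₀ (c e₀) =
              Sum.inr ⟨(e₀, c e₀ - 1), show c e₀ - 1 < c e₀ by omega⟩ :=
            nodeC_inr G (c := c) (e := e₀) (i := c e₀) (by omega)
              (show c e₀ - 1 < c e₀ by omega)
          rw [hA'] at hy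
          exact he (nodeC_inr_elim G hy).1.symm
        · have h00 : c e₀ = 0 := by omega
          rw [h00, nodeC_zero] at hy
          obtain ⟨hie, hu2⟩ :=
            nodeC_inl_snd_elim G (c := c) (e := e) (i := i) (by omega) hy
          have o1 := e.2.2
          have o2 := e₀.2.2
          rw [← hu1, ← hu2] at o1
          omega
  constructor
  · rintro ⟨hne, hrel | hrel⟩
    · exact ⟨hne_iff.mp hne, relback a b hrel⟩
    · refine ⟨hne_iff.mp hne, ?_⟩
      rcases relback b a hrel with h' | h'
      · exact Or.inr h'
      · exact Or.inl h'
  · rintro ⟨hne, hSR | hSR⟩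
    · refine ⟨hne_iff.mpr hne, ?_⟩
      rcases hSR with ⟨x, y, rfl, rfl, hadj, h1, h2⟩ | ⟨rfl, hb⟩
      · rw [MC_adj] at hadj
        rcases hadj.2 with hrel | hrel
        · exact Or.inl (relmap x y hrel h1 h2)
        · exact Or.inr (relmap y x hrel
            (fun h => h2 ⟨h.2, h.1⟩) (fun h => h1 ⟨h.2, h.1⟩))
      · rcases hb with rfl | rfl
        · right
          exact ⟨e₀, c e₀, by rw [hc', update_self']; omega,
            by rw [hA, hf, stepMap_node_le G c e₀ le_rfl],
            by rw [hf, stepMap_none G c e₀]⟩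
        · left
          exact ⟨e₀, c e₀ + 1, by rw [hc', update_self'],
            by rw [hf, stepMap_none G c e₀],
            by rw [hB, hf, stepMap_B G c e₀]⟩
    · refine ⟨hne_iff.mpr hne, ?_⟩
      rcases hSR with ⟨x, y, rfl, rfl, hadj, h1, h2⟩ | ⟨rfl, hb⟩
      · rw [MC_adj] at hadj
        rcases hadj.2 with hrel | hrel
        · exact Or.inr (relmap x y hrel h1 h2)
        · exact Or.inl (relmap y x hrel
            (fun h => h2 ⟨h.2, h.1⟩) (fun h => h1 ⟨h.2, h.1⟩))
      · rcases hb with rfl | rfl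
        · left
          exact ⟨e₀, c e₀, by rw [hc', update_self']; omega,
            by rw [hA, hf, stepMap_node_le G c e₀ le_rfl],
            by rw [hf, stepMap_none G c e₀]⟩
        · right
          exact ⟨e₀, c e₀ + 1, by rw [hc', update_self'],
            by rw [hf, stepMap_none G c e₀],
            by rw [hB, hf, stepMap_B G c e₀]⟩

end Step

section Tower
open Classical
variable {V : Type} [Fintype V] (G : SimpleGraph V)

noncomputable instance : Fintype (EdgeT G) := Fintype.ofFinite _

lemma tower : ∀ (n : ℕ) (c : EdgeT G → ℕ), (∑ e, c e) = n →
    ∃ (W : Type) (_ : Fintype W) (H : SimpleGraph W),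
      IsSubdivision G H ∧ Nonempty (H ≃g MC G c) := by
  intro n
  induction n using Nat.strong_induction_on with
  | _ n IH =>
  intro c hsum
  by_cases hz : ∀ e, c e = 0
  · exact ⟨V, inferInstance, G, IsSubdivision.refl G, base_iso G hz⟩
  · push_neg at hz
    obtain ⟨e₀, he₀⟩ := hz
    set c₀ := Function.update c e₀ (c e₀ - 1) with hc₀
    have hcc : c = Function.update c₀ e₀ (c₀ e₀ + 1) := by
      funext e
      by_cases he : e = e₀
      · subst he
        rw [Function.update_self, hc₀, Function.update_self]
        omega
      · rw [Function.update_of_ne he, hc₀, Function.update_of_ne he]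
    have hsum0 : ∑ e, c₀ e < n := by
      have h1 : ∑ e, c₀ e = (c e₀ - 1) + ∑ e ∈ Finset.univ.erase e₀, c e := by
        rw [hc₀, Finset.sum_update_of_mem (Finset.mem_univ e₀), Finset.erase_eq]
      have h2 : c e₀ + ∑ e ∈ Finset.univ.erase e₀, c e = ∑ e, c e :=
        Finset.add_sum_erase _ _ (Finset.mem_univ e₀)
      omega
    obtain ⟨W, FT, H, hsub, ⟨iso⟩⟩ := IH (∑ e, c₀ e) hsum0 c₀ rfl
    have hAB : (MC G c₀).Adj (nodeC G c₀ e₀ (c₀ e₀)) (nodeC G c₀ e₀ (c₀ e₀ + 1)) :=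
      AB_adj G c₀ e₀
    set A := nodeC G c₀ e₀ (c₀ e₀)
    set B := nodeC G c₀ e₀ (c₀ e₀ + 1)
    have hAB' : H.Adj (iso.symm A) (iso.symm B) := iso.symm.map_adj_iff.mpr hAB
    haveI := FT
    refine ⟨Option W, inferInstance, subdivideEdge H (iso.symm A) (iso.symm B),
      IsSubdivision.step G H _ _ hAB' hsub, ?_⟩
    obtain ⟨iso2⟩ := subdiv_iso iso (iso.symm A) (iso.symm B)
    rw [RelIso.apply_symm_apply, RelIso.apply_symm_apply] at iso2
    obtain ⟨iso3⟩ := step_iso G c₀ e₀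
    rw [← hcc] at iso3
    exact ⟨iso2.trans iso3⟩

theorem stmt13' {V : Type} [Fintype V] (G : SimpleGraph V) :
    ∃ (W : Type) (_ : Fintype W) (H : SimpleGraph W), IsSubdivision G H ∧ piNR H ≤ 4 := by
  classical
  obtain ⟨W, FT, H, hsub, ⟨iso⟩⟩ := tower G (∑ e, elen G e) (elen G) rfl
  refine ⟨W, FT, H, hsub, ?_⟩
  apply Nat.sInf_le
  refine ⟨fun w => fstar G (iso w), ?_⟩
  intro t v ht hpath hrep
  apply main_nonrep G t (fun i => iso (v i)) ht
  · constructor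
    · intro i hi
      exact iso.map_adj_iff.mpr (hpath.1 i hi)
    · intro i hi i' hi' h
      exact hpath.2 i hi i' hi' (iso.injective h)
  · exact hrep

end Tower

/-- Every graph `G` has a subdivision `H` with `π(H) ≤ 4`. -/
theorem stmt13 {V : Type} [Fintype V] (G : SimpleGraph V) :
    ∃ (W : Type) (_ : Fintype W) (H : SimpleGraph W), IsSubdivision G H ∧ piNR H ≤ 4 := by
  exact stmt13' G
end

section
/- For every integer c ≥ 1 and every n ≥ c−1, the maximum number of edges in an n-vertex graph G with π(G) ≤ c is (c−1)n − C(c,2). In particular: every n-vertex graph G with π(G) ≤ c has at most (c−1)n − C(c,2) edges, and this bound is attained by the graph consisting of a complete graph K_{c−1} joined completely to an independent set of n−(c−1) vertices. -/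
open SimpleGraph

section AuxStmt14
open Finset

lemma pathNR_comp {V : Type} {c k : ℕ} {G : SimpleGraph V} {f : V → Fin k} (g : Fin k → Fin c)
    (hg : ∀ u w : V, g (f u) = g (f w) → f u = f w) (hf : PathNonrepetitive G f) :
    PathNonrepetitive G (g ∘ f) := by
  intro t v ht hp hrep
  exact hf t v ht hp (fun i hi => hg _ _ (hrep i hi))

lemma pathNR_of_injective {V : Type} {k : ℕ} (G : SimpleGraph V) (f : V → Fin k)
    (hf : Function.Injective f) : PathNonrepetitive G f := by
  intro t v ht hp hrep
  have h0 := hrep 0 ht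
  have := hp.2 0 (by omega) t (by omega) (hf (by simpa using h0))
  omega

lemma pathNR_proper {V : Type} {c : ℕ} {G : SimpleGraph V} {f : V → Fin c}
    (hf : PathNonrepetitive G f) {u w : V} (h : G.Adj u w) : f u ≠ f w := by
  intro hfe
  set v : ℕ → V := fun i => if i = 0 then u else w with hv
  refine hf 1 v one_pos ⟨?_, ?_⟩ ?_
  · intro i hi
    have : i = 0 := by omega
    simpa [this, hv] using h
  · intro i hi j hj hij
    interval_cases i <;> interval_cases j <;> simp_all [hv]
  · intro i hi
    have : i = 0 := by omega
    simp [this, hv, hfe]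

lemma pathNR_noP4 {V : Type} {c : ℕ} {G : SimpleGraph V} {f : V → Fin c}
    (hf : PathNonrepetitive G f) {x u w y : V}
    (hxu : G.Adj x u) (huw : G.Adj u w) (hwy : G.Adj w y)
    (hxw : x ≠ w) (hxy : x ≠ y) (huy : u ≠ y)
    (h1 : f x = f w) (h2 : f u = f y) : False := by
  set v : ℕ → V := fun i => if i = 0 then x else if i = 1 then u else if i = 2 then w else y
    with hv
  refine hf 2 v two_pos ⟨?_, ?_⟩ ?_
  · intro i hi
    have hi4 : i < 3 := by omega
    interval_cases i <;> simpa [hv]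
  · intro i hi j hj hij
    have h1' := hxu.ne
    have h2' := huw.ne
    have h3' := hwy.ne
    have h4 := hxu.ne'
    have h5 := huw.ne'
    have h6 := hwy.ne'
    have h7 := hxw.symm
    have h8 := hxy.symm
    have h9 := huy.symm
    have hi4 : i < 4 := by omega
    have hj4 : j < 4 := by omega
    interval_cases i <;> interval_cases j <;> (try rfl) <;>
      (simp only [hv] at hij; norm_num at hij; tauto)
  · intro i hi
    interval_cases i <;> simp [hv, h1, h2]


lemma sumP {c : ℕ} (na : Fin c → ℕ) (N : ℕ) (hN : ∑ a, na a = N) :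
    ∑ q ∈ (Finset.univ.offDiag.filter (fun q : Fin c × Fin c => q.1 < q.2)),
      (na q.1 + na q.2) = (c - 1) * N := by
  set g : Fin c × Fin c → ℕ := fun q => na q.1 + na q.2 with hg
  have hswap : ∑ q ∈ Finset.univ.offDiag.filter (fun q : Fin c × Fin c => ¬ q.1 < q.2), g q
      = ∑ q ∈ Finset.univ.offDiag.filter (fun q : Fin c × Fin c => q.1 < q.2), g q := by
    refine Finset.sum_nbij' (i := Prod.swap) (j := Prod.swap) ?_ ?_ ?_ ?_ ?_
    · rintro ⟨x, y⟩ h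
      simp only [Finset.mem_filter, Finset.mem_offDiag] at h ⊢
      exact ⟨⟨h.1.2.1, h.1.1, h.1.2.2.symm⟩, lt_of_le_of_ne (le_of_not_gt h.2) h.1.2.2.symm⟩
    · rintro ⟨x, y⟩ h
      simp only [Finset.mem_filter, Finset.mem_offDiag] at h ⊢
      exact ⟨⟨h.1.2.1, h.1.1, h.1.2.2.symm⟩, fun hlt => absurd h.2 (not_lt.2 (le_of_lt hlt))⟩
    · rintro ⟨x, y⟩ _; rfl
    · rintro ⟨x, y⟩ _; rfl
    · rintro ⟨x, y⟩ _; simp [hg, Nat.add_comm]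
  have hsplit := Finset.sum_filter_add_sum_filter_not (Finset.univ.offDiag)
    (fun q : Fin c × Fin c => q.1 < q.2) g
  have hunion : ∑ q ∈ Finset.univ.diag, g q + ∑ q ∈ Finset.univ.offDiag, g q
      = ∑ q ∈ (Finset.univ ×ˢ Finset.univ : Finset (Fin c × Fin c)), g q := by
    rw [← Finset.sum_union (Finset.disjoint_diag_offDiag _), Finset.diag_union_offDiag]
  have hdiag : ∑ q ∈ Finset.univ.diag, g q = 2 * N := by
    rw [Finset.sum_diag]
    simp only [hg]
    rw [← hN, Finset.mul_sum]
    exact Finset.sum_congr rfl (fun a _ => by ring)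
  have hprod : ∑ q ∈ (Finset.univ ×ˢ Finset.univ : Finset (Fin c × Fin c)), g q = 2 * c * N := by
    rw [Finset.sum_product]
    simp only [hg]
    have : ∀ a : Fin c, ∑ b : Fin c, (na a + na b) = c * na a + N := by
      intro a
      rw [Finset.sum_add_distrib, Finset.sum_const, hN]
      simp [Finset.card_univ, mul_comm]
    rw [Finset.sum_congr rfl (fun a _ => this a), Finset.sum_add_distrib, Finset.sum_const,
      ← Finset.mul_sum, hN]
    simp [Finset.card_univ]
    ring
  have hc : c * N = (c - 1) * N + N ∨ (c = 0 ∧ N = 0) := by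
    rcases Nat.eq_zero_or_pos c with h | h
    · right
      refine ⟨h, ?_⟩
      rw [← hN]
      subst h
      simp
    · left
      rcases Nat.exists_eq_add_of_le h with ⟨k, rfl⟩
      simp only [Nat.add_sub_cancel_left]
      ring
  rcases hc with hc | ⟨rfl, rfl⟩
  · show ∑ q ∈ (Finset.univ.offDiag.filter (fun q : Fin c × Fin c => q.1 < q.2)), g q = (c-1) * N
    have h2cN : 2 * c * N = 2 * ((c - 1) * N + N) := by rw [← hc]; ring
    omega
  · simp


lemma two_mul_choose_two (c : ℕ) : 2 * c.choose 2 = c * (c - 1) := by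
  induction c with
  | zero => simp
  | succ k ih =>
    have h1 : (k+1).choose 2 = k + k.choose 2 := by
      rw [Nat.choose_succ_succ, Nat.choose_one_right]
    have h2 : 2*k + k*(k-1) = (k+1)*(k+1-1) := by
      rcases Nat.eq_zero_or_pos k with rfl | hk
      · simp
      · rcases Nat.exists_eq_add_of_le hk with ⟨j, rfl⟩
        simp only [Nat.add_sub_cancel_left, Nat.add_sub_cancel]
        ring
    omega

lemma cardP (c : ℕ) :
    (Finset.univ.offDiag.filter (fun q : Fin c × Fin c => q.1 < q.2)).card = c.choose 2 := by
  have hswap : (Finset.univ.offDiag.filter (fun q : Fin c × Fin c => ¬ q.1 < q.2)).card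
      = (Finset.univ.offDiag.filter (fun q : Fin c × Fin c => q.1 < q.2)).card := by
    refine Finset.card_nbij (i := Prod.swap) ?_ ?_ ?_
    · rintro ⟨x, y⟩ h
      simp only [Finset.mem_coe, Finset.mem_filter, Finset.mem_offDiag] at h ⊢
      exact ⟨⟨h.1.2.1, h.1.1, h.1.2.2.symm⟩, lt_of_le_of_ne (le_of_not_gt h.2) h.1.2.2.symm⟩
    · intro p hp q hq hpq
      exact Prod.swap_injective hpq
    · rintro ⟨x, y⟩ h
      refine ⟨(y, x), ?_, rfl⟩
      simp only [Finset.coe_filter, Finset.mem_offDiag, Set.mem_setOf_eq, Finset.mem_coe,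
        Finset.mem_filter] at h ⊢
      obtain ⟨⟨_, _, hne⟩, hlt⟩ := h
      exact ⟨⟨by simp, by simp, hne.symm⟩, fun h' => absurd h' (not_lt.2 (le_of_lt hlt))⟩
  have hsplit := Finset.card_filter_add_card_filter_not
    (s := Finset.univ.offDiag) (p := fun q : Fin c × Fin c => q.1 < q.2)
  have hoff : (Finset.univ.offDiag : Finset (Fin c × Fin c)).card = c * c - c := by
    rw [Finset.offDiag_card]
    simp [Finset.card_univ]
  have h2 := two_mul_choose_two c
  have hcc : c * c - c = c * (c - 1) := by
    rcases Nat.eq_zero_or_pos c with rfl | hc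
    · simp
    · rcases Nat.exists_eq_add_of_le hc with ⟨k, rfl⟩
      simp only [Nat.add_sub_cancel_left]
      ring_nf
      omega
  omega


lemma fiber_bound {V : Type} [Fintype V] {c : ℕ} {G : SimpleGraph V} [DecidableRel G.Adj]
    {f : V → Fin c} (hf : PathNonrepetitive G f)
    (colPair : Sym2 V → Fin c × Fin c)
    (hcp : ∀ u w : V, colPair s(u, w) = (min (f u) (f w), max (f u) (f w)))
    {a b : Fin c} (hab : a < b)
    (hna : 1 ≤ (univ.filter (fun v => f v = a)).card)
    (hnb : 1 ≤ (univ.filter (fun v => f v = b)).card) :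
    (G.edgeFinset.filter (fun e => colPair e = (a, b))).card + 1
      ≤ (univ.filter (fun v => f v = a)).card + (univ.filter (fun v => f v = b)).card := by
  classical
  set ClA := (univ.filter (fun v => f v = a)) with hClA
  set ClB := (univ.filter (fun v => f v = b)) with hClB
  set F := (G.edgeFinset.filter (fun e => colPair e = (a, b))) with hFdef
  have hmemF : ∀ u w : V, s(u, w) ∈ F → G.Adj u w ∧
      ((f u = a ∧ f w = b) ∨ (f u = b ∧ f w = a)) := by
    intro u w h
    rw [hFdef, Finset.mem_filter, mem_edgeFinset, mem_edgeSet] at h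
    obtain ⟨hadj, hcpe⟩ := h
    rw [hcp u w, Prod.mk.injEq] at hcpe
    refine ⟨hadj, ?_⟩
    rcases le_total (f u) (f w) with hle | hle
    · rw [min_eq_left hle, max_eq_right hle] at hcpe
      exact Or.inl hcpe
    · rw [min_eq_right hle, max_eq_left hle] at hcpe
      exact Or.inr ⟨hcpe.2, hcpe.1⟩
  have hcol : ∀ e ∈ F, ∀ x ∈ e, f x = a ∨ f x = b := by
    intro e he
    induction e using Sym2.ind with
    | _ u w =>
      intro x hx
      rcases Sym2.mem_iff.1 hx with rfl | rfl
      · rcases (hmemF _ _ he).2 with ⟨h1, _⟩ | ⟨h1, _⟩ <;> [exact Or.inl h1; exact Or.inr h1]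
      · rcases (hmemF _ _ he).2 with ⟨_, h1⟩ | ⟨_, h1⟩ <;> [exact Or.inr h1; exact Or.inl h1]
  set Center : V → Prop := fun x => ∃ e1 ∈ F, ∃ e2 ∈ F, e1 ≠ e2 ∧ x ∈ e1 ∧ x ∈ e2
    with hCenter
  have hCedge : ∀ x : V, Center x → ∀ e : Sym2 V, ∃ e' ∈ F, x ∈ e' ∧ e' ≠ e := by
    intro x hx e
    obtain ⟨e1, he1, e2, he2, hne, hx1, hx2⟩ := hx
    by_cases h : e1 = e
    · exact ⟨e2, he2, hx2, h ▸ hne.symm⟩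
    · exact ⟨e1, he1, hx1, h⟩
  have K1 : ∀ u w : V, s(u, w) ∈ F → Center u → Center w → False := by
    intro u w hFuw hu hw
    obtain ⟨e', he'F, hue', hne'⟩ := hCedge u hu s(u, w)
    obtain ⟨x, rfl⟩ := Sym2.mem_iff_exists.1 hue'
    obtain ⟨e'', he''F, hwe'', hne''⟩ := hCedge w hw s(u, w)
    obtain ⟨y, rfl⟩ := Sym2.mem_iff_exists.1 hwe''
    obtain ⟨huw, hcuw⟩ := hmemF _ _ hFuw
    obtain ⟨hux, hcux⟩ := hmemF _ _ he'F
    obtain ⟨hwy, hcwy⟩ := hmemF _ _ he''F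
    have hxw : x ≠ w := by rintro rfl; exact hne' rfl
    have hyu : y ≠ u := by
      rintro rfl
      exact hne'' (Sym2.eq_swap)
    have habne : a ≠ b := hab.ne
    have hfx : f x = f w := by
      rcases hcuw with ⟨h1, h2⟩ | ⟨h1, h2⟩ <;> rcases hcux with ⟨h3, h4⟩ | ⟨h3, h4⟩ <;>
        simp_all
    have hfy : f y = f u := by
      rcases hcuw with ⟨h1, h2⟩ | ⟨h1, h2⟩ <;> rcases hcwy with ⟨h3, h4⟩ | ⟨h3, h4⟩ <;>
        simp_all
    have hxy : x ≠ y := by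
      rintro rfl
      rw [hfx] at hfy
      exact pathNR_proper hf huw hfy.symm
    exact pathNR_noP4 hf hux.symm huw hwy hxw hxy hyu.symm hfx hfy.symm
  have hdisj : Disjoint ClA ClB := by
    rw [Finset.disjoint_left]
    intro v hva hvb
    rw [hClA, Finset.mem_filter] at hva
    rw [hClB, Finset.mem_filter] at hvb
    exact hab.ne (hva.2 ▸ hvb.2 ▸ rfl)
  have hcardU : (ClA ∪ ClB).card = ClA.card + ClB.card := Finset.card_union_of_disjoint hdisj
  by_cases hcen : ∃ z, Center z
  · obtain ⟨z, hz⟩ := hcen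
    have hzU : z ∈ ClA ∪ ClB := by
      obtain ⟨e1, he1, _, _, _, hz1, _⟩ := hz
      rcases hcol e1 he1 z hz1 with h | h
      · exact Finset.mem_union_left _ (by rw [hClA, Finset.mem_filter]; exact ⟨Finset.mem_univ _, h⟩)
      · exact Finset.mem_union_right _ (by rw [hClB, Finset.mem_filter]; exact ⟨Finset.mem_univ _, h⟩)
    set Φ : Sym2 V → V := fun e => if h : ∃ x, x ∈ e ∧ ¬ Center x then h.choose else z with hΦdef
    have hΦ : ∀ e ∈ F, Φ e ∈ e ∧ ¬ Center (Φ e) := by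
      intro e he
      have hex : ∃ x, x ∈ e ∧ ¬ Center x := by
        induction e using Sym2.ind with
        | _ u w =>
          by_cases hu : Center u
          · exact ⟨w, Sym2.mem_mk_right _ _, fun hw => K1 u w he hu hw⟩
          · exact ⟨u, Sym2.mem_mk_left _ _, hu⟩
      rw [hΦdef]
      simp only [dif_pos hex]
      exact hex.choose_spec
    have hinj : Set.InjOn Φ F := by
      intro e1 he1 e2 he2 heq
      by_contra hne
      rw [Finset.mem_coe] at he1 he2
      exact (hΦ _ he1).2 ⟨e1, he1, e2, he2, hne, (hΦ _ he1).1, heq ▸ (hΦ _ he2).1⟩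
    have hmaps : ∀ e ∈ F, Φ e ∈ (ClA ∪ ClB).erase z := by
      intro e he
      refine Finset.mem_erase.2 ⟨?_, ?_⟩
      · intro h
        exact (hΦ _ he).2 (h ▸ hz)
      · rcases hcol e he _ (hΦ _ he).1 with h | h
        · exact Finset.mem_union_left _ (by rw [hClA, Finset.mem_filter]; exact ⟨Finset.mem_univ _, h⟩)
        · exact Finset.mem_union_right _ (by rw [hClB, Finset.mem_filter]; exact ⟨Finset.mem_univ _, h⟩)
    have hle := Finset.card_le_card_of_injOn Φ hmaps hinj
    rw [Finset.card_erase_of_mem hzU, hcardU] at hle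
    have hU1 : 1 ≤ ClA.card + ClB.card := by omega
    omega
  · rcases F.eq_empty_or_nonempty with hFe | hFne
    · rw [hFe]; simp; omega
    · obtain ⟨z0, hz0⟩ := Finset.card_pos.1 hna
      set Ψ : Sym2 V → V := fun e => if h : ∃ x, x ∈ e ∧ f x = a then h.choose else z0 with hΨdef
      have hΨ : ∀ e ∈ F, Ψ e ∈ e ∧ f (Ψ e) = a := by
        intro e he
        have hex : ∃ x, x ∈ e ∧ f x = a := by
          induction e using Sym2.ind with
          | _ u w =>
            rcases (hmemF _ _ he).2 with ⟨h1, _⟩ | ⟨_, h2⟩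
            · exact ⟨u, Sym2.mem_mk_left _ _, h1⟩
            · exact ⟨w, Sym2.mem_mk_right _ _, h2⟩
        rw [hΨdef]
        simp only [dif_pos hex]
        exact hex.choose_spec
      have hinj : Set.InjOn Ψ F := by
        intro e1 he1 e2 he2 heq
        by_contra hne
        rw [Finset.mem_coe] at he1 he2
        exact hcen ⟨Ψ e1, e1, he1, e2, he2, hne, (hΨ _ he1).1, heq ▸ (hΨ _ he2).1⟩
      have hmaps : ∀ e ∈ F, Ψ e ∈ ClA := by
        intro e he
        rw [hClA, Finset.mem_filter]
        exact ⟨Finset.mem_univ _, (hΨ _ he).2⟩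
      have hle := Finset.card_le_card_of_injOn Ψ hmaps hinj
      omega


lemma choose_two_succ (m : ℕ) : (m+1).choose 2 = m + m.choose 2 := by
  rw [Nat.choose_succ_succ, Nat.choose_one_right]

lemma edge_bound (c : ℕ) : ∀ (V : Type) [Fintype V] (G : SimpleGraph V)
    [DecidableRel G.Adj] (f : V → Fin c), PathNonrepetitive G f →
    c - 1 ≤ Fintype.card V →
    G.edgeFinset.card + c.choose 2 ≤ (c - 1) * Fintype.card V := by
  induction c with
  | zero =>
    intro V _ G _ f _ _
    have hV : IsEmpty V := ⟨fun v => (f v).elim0⟩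
    have hE : G.edgeFinset = ∅ := by
      refine Finset.eq_empty_of_forall_notMem ?_
      intro e
      induction e using Sym2.ind with
      | _ x y => exact fun _ => isEmptyElim x
    simp [hE]
  | succ m ih =>
    intro V _ G _ f hf hn
    simp only [Nat.add_sub_cancel] at hn ⊢
    by_cases hsurj : Function.Surjective f
    · -- counting argument
      set N := Fintype.card V with hNdef
      set na : Fin (m+1) → ℕ := fun a => (univ.filter (fun v => f v = a)).card with hnadef
      have hN : ∑ a, na a = N := by
        rw [hnadef, hNdef, ← Finset.card_univ]
        exact (Finset.card_eq_sum_card_fiberwise (fun x _ => Finset.mem_univ (f x))).symm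
      set colPair : Sym2 V → Fin (m+1) × Fin (m+1) :=
        Sym2.lift ⟨fun u w => (min (f u) (f w), max (f u) (f w)),
          by intro u w; simp [min_comm, max_comm]⟩ with hcpdef
      have hcp : ∀ u w : V, colPair s(u, w) = (min (f u) (f w), max (f u) (f w)) := by
        intro u w; rw [hcpdef]; simp
      set P := (Finset.univ.offDiag.filter (fun q : Fin (m+1) × Fin (m+1) => q.1 < q.2))
        with hPdef
      have hcard : G.edgeFinset.card
          = ∑ q ∈ P, (G.edgeFinset.filter (fun e => colPair e = q)).card := by
        refine Finset.card_eq_sum_card_fiberwise ?_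
        intro e he
        induction e using Sym2.ind with
        | _ u w =>
          have hadj : G.Adj u w := by rwa [Finset.mem_coe, mem_edgeFinset, mem_edgeSet] at he
          have hne : f u ≠ f w := pathNR_proper hf hadj
          rw [hPdef, Finset.mem_coe, Finset.mem_filter, Finset.mem_offDiag, hcp]
          exact ⟨⟨Finset.mem_univ _, Finset.mem_univ _, (min_lt_max.2 hne).ne⟩, min_lt_max.2 hne⟩
      have hbound : ∀ q ∈ P, (G.edgeFinset.filter (fun e => colPair e = q)).card + 1
          ≤ na q.1 + na q.2 := by
        rintro ⟨x, y⟩ hq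
        rw [hPdef, Finset.mem_filter] at hq
        have hlt : x < y := hq.2
        have hnx : 1 ≤ na x := by
          obtain ⟨v, hv⟩ := hsurj x
          exact Finset.card_pos.2 ⟨v, Finset.mem_filter.2 ⟨Finset.mem_univ _, hv⟩⟩
        have hny : 1 ≤ na y := by
          obtain ⟨v, hv⟩ := hsurj y
          exact Finset.card_pos.2 ⟨v, Finset.mem_filter.2 ⟨Finset.mem_univ _, hv⟩⟩
        exact fiber_bound hf colPair hcp hlt hnx hny
      have hsum : ∑ q ∈ P, ((G.edgeFinset.filter (fun e => colPair e = q)).card + 1)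
          ≤ ∑ q ∈ P, (na q.1 + na q.2) := Finset.sum_le_sum hbound
      rw [Finset.sum_add_distrib, Finset.sum_const, smul_eq_mul, mul_one] at hsum
      have hPcard : P.card = (m+1).choose 2 := cardP (m+1)
      have hsumP : ∑ q ∈ P, (na q.1 + na q.2) = ((m+1) - 1) * N := sumP na N hN
      simp only [Nat.add_sub_cancel] at hsumP
      omega
    · rw [Function.Surjective] at hsurj
      push_neg at hsurj
      obtain ⟨a, ha⟩ := hsurj
      have ha : ∀ v, f v ≠ a := fun v hv => (ha v) hv
      rcases Nat.eq_zero_or_pos m with rfl | hm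
      · have hV : IsEmpty V := ⟨fun v => ha v (Fin.ext (by have := (f v).isLt; have := a.isLt; omega))⟩
        have hE : G.edgeFinset = ∅ := by
          refine Finset.eq_empty_of_forall_notMem ?_
          intro e
          induction e using Sym2.ind with
          | _ x y => exact fun _ => isEmptyElim x
        simp [hE]
      · set g : Fin (m+1) → Fin m := fun x =>
          if h : (x : ℕ) < (a : ℕ) then ⟨x, by have := a.isLt; omega⟩
          else ⟨(x : ℕ) - 1, by have := x.isLt; omega⟩ with hgdef
        have hg : ∀ u w : V, g (f u) = g (f w) → f u = f w := by
          intro u w h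
          have hu : ((f u) : ℕ) ≠ (a : ℕ) := fun hh => ha u (Fin.ext hh)
          have hw : ((f w) : ℕ) ≠ (a : ℕ) := fun hh => ha w (Fin.ext hh)
          rw [hgdef] at h
          simp only [] at h
          apply Fin.ext
          split_ifs at h with h1 h2 h2 <;> simp only [Fin.mk.injEq] at h <;> omega
        have hf' : PathNonrepetitive G (g ∘ f) := pathNR_comp g hg hf
        have hmn : m - 1 ≤ Fintype.card V := by omega
        have := ih V G (g ∘ f) hf' hmn
        have h1 := choose_two_succ m
        have h2 : (m - 1) * Fintype.card V + Fintype.card V = m * Fintype.card V := by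
          rcases Nat.exists_eq_add_of_le hm with ⟨k, rfl⟩
          simp only [Nat.add_sub_cancel_left]
          ring
        omega


end AuxStmt14

/-- For `c ≥ 1` and `n ≥ c - 1`, the maximum number of edges in an `n`-vertex graph `G` with
`π(G) ≤ c` is `(c-1)n - C(c,2)`; the bound is attained by `K_{c-1}` completely joined to an
independent set of `n - (c-1)` vertices. -/
theorem stmt14 (c n : ℕ) (hc : 1 ≤ c) (hn : c - 1 ≤ n) :
    (∀ (V : Type) [Fintype V], Fintype.card V = n → ∀ G : SimpleGraph V,
      piNR G ≤ c → G.edgeSet.ncard ≤ (c - 1) * n - c.choose 2) ∧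
    (piNR (SimpleGraph.fromRel (fun (i _ : Fin n) => (i : ℕ) < c - 1)) ≤ c ∧
      (SimpleGraph.fromRel (fun (i _ : Fin n) => (i : ℕ) < c - 1)).edgeSet.ncard
        = (c - 1) * n - c.choose 2) := by
  classical
  refine ⟨?_, ?_, ?_⟩
  · -- Part 1: upper bound
    intro V _ hV G h
    have hSne : (Fintype.card V) ∈ {k | ∃ f : V → Fin k, PathNonrepetitive G f} :=
      ⟨Fintype.equivFin V, pathNR_of_injective _ _ (Equiv.injective _)⟩
    have hmem : piNR G ∈ {k | ∃ f : V → Fin k, PathNonrepetitive G f} :=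
      Nat.sInf_mem ⟨_, hSne⟩
    obtain ⟨f, hfnr⟩ := hmem
    have hf' : PathNonrepetitive G ((Fin.castLE h) ∘ f) :=
      pathNR_comp (Fin.castLE h) (fun u w hh => Fin.castLE_injective h hh) hfnr
    haveI : DecidableRel G.Adj := Classical.decRel _
    have hb := edge_bound c V G ((Fin.castLE h) ∘ f) hf' (by omega)
    rw [hV] at hb
    have hncard : G.edgeSet.ncard = G.edgeFinset.card := by
      rw [← SimpleGraph.coe_edgeFinset, Set.ncard_coe_finset]
    omega
  · -- Part 2a: extremal graph is nonrepetitively c-colourable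
    set H := SimpleGraph.fromRel (fun (i _ : Fin n) => (i : ℕ) < c - 1) with hHdef
    refine Nat.sInf_le ?_
    refine ⟨fun i => ⟨min (i : ℕ) (c - 1), by omega⟩, ?_⟩
    intro t v ht hpath hrep
    obtain ⟨hwalk, hdist⟩ := hpath
    have hge : ∀ k < 2 * t, c - 1 ≤ (v k : ℕ) := by
      have key : ∀ i < t, c - 1 ≤ (v i : ℕ) ∧ c - 1 ≤ (v (t + i) : ℕ) := by
        intro i hi
        have h1 := hrep i hi
        have h2 : min ((v i : ℕ)) (c - 1) = min ((v (t + i) : ℕ)) (c - 1) := by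
          simpa [Fin.ext_iff] using h1
        have hne : (v i : ℕ) ≠ (v (t + i) : ℕ) := by
          intro he
          have := hdist i (by omega) (t + i) (by omega) (Fin.ext he)
          omega
        omega
      intro k hk
      rcases lt_or_ge k t with h | h
      · exact (key k h).1
      · have := (key (k - t) (by omega)).2
        rwa [show t + (k - t) = k by omega] at this
    have hadj := hwalk 0 (by omega)
    rw [hHdef, SimpleGraph.fromRel_adj] at hadj
    norm_num at hadj
    have h0 := hge 0 (by omega)
    have h1 := hge 1 (by omega)
    omega
  · -- Part 2b: edge count of the extremal graph
    set H := SimpleGraph.fromRel (fun (i _ : Fin n) => (i : ℕ) < c - 1) with hHdef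
    haveI : DecidableRel H.Adj := Classical.decRel _
    have hAdj : ∀ i j : Fin n, H.Adj i j ↔ i ≠ j ∧ ((i : ℕ) < c - 1 ∨ (j : ℕ) < c - 1) := by
      intro i j
      rw [hHdef, SimpleGraph.fromRel_adj]
    have hcf : (Finset.univ.filter (fun j : Fin n => (j : ℕ) < c - 1)).card = c - 1 := by
      have hbij : (Finset.univ.filter (fun j : Fin n => (j : ℕ) < c - 1)).card
          = (Finset.range (c-1)).card := by
        refine Finset.card_bij' (fun j _ => (j : ℕ)) (fun k hk => ⟨k, ?_⟩) ?_ ?_ ?_ ?_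
        · have := Finset.mem_range.1 hk
          omega
        · intro j hj
          simp only [Finset.mem_filter] at hj
          exact Finset.mem_range.2 hj.2
        · intro k hk
          simp only [Finset.mem_filter]
          exact ⟨Finset.mem_univ _, by simpa using Finset.mem_range.1 hk⟩
        · intro j hj; rfl
        · intro k hk; rfl
      rw [hbij, Finset.card_range]
    have hdeg1 : ∀ i : Fin n, (i : ℕ) < c - 1 → H.degree i = n - 1 := by
      intro i hi
      rw [SimpleGraph.degree]
      have : H.neighborFinset i = Finset.univ.erase i := by
        ext j
        rw [SimpleGraph.mem_neighborFinset, hAdj, Finset.mem_erase]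
        constructor
        · rintro ⟨h1, _⟩; exact ⟨fun he => h1 he.symm, Finset.mem_univ _⟩
        · rintro ⟨h1, _⟩; exact ⟨fun he => h1 he.symm, Or.inl hi⟩
      rw [this, Finset.card_erase_of_mem (Finset.mem_univ _), Finset.card_univ, Fintype.card_fin]
    have hdeg2 : ∀ i : Fin n, ¬ ((i : ℕ) < c - 1) → H.degree i = c - 1 := by
      intro i hi
      rw [SimpleGraph.degree]
      have : H.neighborFinset i = Finset.univ.filter (fun j : Fin n => (j : ℕ) < c - 1) := by
        ext j
        rw [SimpleGraph.mem_neighborFinset, hAdj, Finset.mem_filter]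
        constructor
        · rintro ⟨h1, h2 | h2⟩
          · exact absurd h2 hi
          · exact ⟨Finset.mem_univ _, h2⟩
        · rintro ⟨_, h2⟩
          exact ⟨fun he => hi (he ▸ h2), Or.inr h2⟩
      rw [this, hcf]
    have hsum : ∑ i, H.degree i = (c - 1) * (n - 1) + (n - (c - 1)) * (c - 1) := by
      rw [← Finset.sum_filter_add_sum_filter_not Finset.univ (fun i : Fin n => (i : ℕ) < c - 1)]
      have e1 : ∑ i ∈ Finset.univ.filter (fun i : Fin n => (i : ℕ) < c - 1), H.degree i
          = (c - 1) * (n - 1) := by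
        rw [Finset.sum_congr rfl (fun i hi => hdeg1 i (Finset.mem_filter.1 hi).2),
          Finset.sum_const, hcf, smul_eq_mul]
      have hcf' : (Finset.univ.filter (fun i : Fin n => ¬ ((i : ℕ) < c - 1))).card
          = n - (c - 1) := by
        have := Finset.card_filter_add_card_filter_not
          (s := (Finset.univ : Finset (Fin n))) (p := fun i : Fin n => (i : ℕ) < c - 1)
        rw [Finset.card_univ, Fintype.card_fin] at this
        omega
      have e2 : ∑ i ∈ Finset.univ.filter (fun i : Fin n => ¬ ((i : ℕ) < c - 1)), H.degree i
          = (n - (c - 1)) * (c - 1) := by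
        rw [Finset.sum_congr rfl (fun i hi => hdeg2 i (Finset.mem_filter.1 hi).2),
          Finset.sum_const, hcf', smul_eq_mul]
      rw [e1, e2]
    have hhand := SimpleGraph.sum_degrees_eq_twice_card_edges H
    rw [hsum] at hhand
    have hkey : (c - 1) * (n - 1) + (n - (c - 1)) * (c - 1) + 2 * c.choose 2
        = 2 * ((c - 1) * n) := by
      rw [two_mul_choose_two]
      rcases Nat.eq_zero_or_pos n with rfl | hnpos
      · have : c = 1 := by omega
        subst this
        simp
      · zify [hc, hn, hnpos]
        ring_nf
    have hncard : H.edgeSet.ncard = H.edgeFinset.card := by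
      rw [← SimpleGraph.coe_edgeFinset, Set.ncard_coe_finset]
    omega
end
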